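/- arXiv:2505.23128 — 9 statements merged into one kernel-verified Lean document; each statement's English description precedes it below -/
import Mathlib

section
/- (Skew Bollobás inequality) Let (X_1,Y_1),...,(X_m,Y_m) be pairs of finite sets such that X_i ∩ Y_i = ∅ for all i, and X_i ∩ Y_j ≠ ∅ whenever i < j. If |X_i| ≤ a and |Y_i| ≤ b for all i, then m ≤ binom(a+b, a). -/
open ExteriorAlgebra Finset

-- Vandermonde vectors
noncomputable def vdm (n : ℕ) (x : ℕ) : Fin n → ℚ := fun l => (x : ℚ) ^ (l : ℕ)

-- wedge multiplication
theorem iMulti_mul {n : ℕ} (p q : ℕ) (f : Fin p → (Fin n → ℚ)) (g : Fin q → (Fin n → ℚ)) :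
    ιMulti ℚ p f * ιMulti ℚ q g = ιMulti ℚ (p + q) (Fin.append f g) := by
  rw [ιMulti_apply, ιMulti_apply, ιMulti_apply]
  have : (fun i => ι ℚ (Fin.append f g i)) =
      Fin.append (fun i => ι ℚ (f i)) (fun i => ι ℚ (g i)) := by
    funext i
    refine Fin.addCases (fun i => ?_) (fun i => ?_) i <;>
      simp [Fin.append_left, Fin.append_right]
  rw [this, List.ofFn_fin_append, List.prod_append]

noncomputable def Dmap (n : ℕ) : ExteriorAlgebra ℚ (Fin n → ℚ) →ₗ[ℚ] ℚ :=
  liftAlternating (Function.update 0 n (Matrix.detRowAlternating (n := Fin n) (R := ℚ)))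

theorem Dmap_apply (n : ℕ) (c : Fin n → (Fin n → ℚ)) :
    Dmap n (ιMulti ℚ n c) = Matrix.det (Matrix.of c) := by
  rw [Dmap, liftAlternating_apply_ιMulti, Function.update_self]
  rfl

theorem Dmap_vdm_ne (n : ℕ) (c : Fin n → ℕ) (hc : Function.Injective c) :
    Dmap n (ιMulti ℚ n (fun k => vdm n (c k))) ≠ 0 := by
  rw [Dmap_apply]
  have : Matrix.of (fun k => vdm n (c k)) = Matrix.vandermonde (fun k => (c k : ℚ)) := rfl
  rw [this, Matrix.det_vandermonde]
  apply Finset.prod_ne_zero_iff.2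
  intro i _
  apply Finset.prod_ne_zero_iff.2
  intro j hj
  have hij : i ≠ j := (Finset.mem_Ioi.1 hj).ne'.symm
  have : (c i : ℚ) ≠ (c j : ℚ) := by
    exact_mod_cast fun h => hij (hc (by exact_mod_cast h))
  exact sub_ne_zero.2 this.symm

-- standard basis vectors
def sbv (n : ℕ) (l : Fin n) : Fin n → ℚ := fun j => if l = j then 1 else 0

noncomputable def gWedge (n a : ℕ) (s : Finset (Fin n)) :
    ExteriorAlgebra ℚ (Fin n → ℚ) :=
  if h : s.card = a then ιMulti ℚ a (fun k => sbv n ((s.orderIsoOfFin h k : Fin n))) else 0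

open scoped Classical in
noncomputable def TSet (n a : ℕ) : Finset (ExteriorAlgebra ℚ (Fin n → ℚ)) :=
  (Finset.powersetCard a (Finset.univ : Finset (Fin n))).image (gWedge n a)

theorem basis_wedge_mem (n a : ℕ) (r : Fin a → Fin n) :
    ιMulti ℚ a (fun k => sbv n (r k)) ∈ Submodule.span ℚ (TSet n a : Set _) := by
  by_cases hinj : Function.Injective r
  · set s : Finset (Fin n) := Finset.univ.image r with hs
    have hcard : s.card = a := by
      rw [hs, Finset.card_image_of_injective _ hinj, Finset.card_univ, Fintype.card_fin]
    have hrange : Set.range r = ↑s := by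
      rw [hs, Finset.coe_image, Finset.coe_univ, Set.image_univ]
    set σ : Equiv.Perm (Fin a) :=
      ((Equiv.ofInjective r hinj).trans (Equiv.setCongr hrange)).trans
        (s.orderIsoOfFin hcard).toEquiv.symm with hσ
    have key : (fun k => sbv n (r k)) =
        (fun k => sbv n ((s.orderIsoOfFin hcard k : Fin n))) ∘ σ := by
      funext k
      have : ((s.orderIsoOfFin hcard (σ k) : Fin n)) = r k := by
        simp only [hσ, Equiv.trans_apply]
        erw [OrderIso.apply_symm_apply]
        rfl
      simp only [Function.comp_apply, this]
    rw [key, AlternatingMap.map_perm]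
    have hmem : ιMulti ℚ a (fun k => sbv n ((s.orderIsoOfFin hcard k : Fin n)))
        ∈ Submodule.span ℚ (TSet n a : Set _) := by
      apply Submodule.subset_span
      simp only [TSet, Finset.coe_image, Set.mem_image, Finset.mem_coe]
      exact ⟨s, Finset.mem_powersetCard.2 ⟨Finset.subset_univ _, hcard⟩,
        by rw [gWedge, dif_pos hcard]⟩
    rcases Int.units_eq_one_or (Equiv.Perm.sign σ) with h | h
    · rw [h, one_smul]; exact hmem
    · rw [h, Units.smul_def, Units.val_neg, Units.val_one, neg_smul, one_smul]
      exact Submodule.neg_mem _ hmem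
  · rw [Function.not_injective_iff] at hinj
    obtain ⟨k1, k2, hr, hne⟩ := hinj
    rw [AlternatingMap.map_eq_zero_of_eq _ _ (by rw [hr]) hne]
    exact Submodule.zero_mem _

theorem wedge_mem_span (n a : ℕ) (c : Fin a → ℕ) :
    ιMulti ℚ a (fun k => vdm n (c k)) ∈ Submodule.span ℚ (TSet n a : Set _) := by
  have expand : (fun k => vdm n (c k)) =
      fun k => ∑ l : Fin n, (vdm n (c k) l) • sbv n l := by
    funext k
    exact pi_eq_sum_univ (vdm n (c k))
  rw [expand]
  rw [show (ιMulti ℚ a (M := Fin n → ℚ)) (fun k => ∑ l : Fin n, (vdm n (c k) l) • sbv n l)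
      = (ιMulti ℚ a (M := Fin n → ℚ)).toMultilinearMap
        (fun k => ∑ l : Fin n, (vdm n (c k) l) • sbv n l) from rfl]
  rw [MultilinearMap.map_sum]
  apply Submodule.sum_mem
  intro r _
  have : (ιMulti ℚ a (M := Fin n → ℚ)).toMultilinearMap
      (fun k => (vdm n (c k) (r k)) • sbv n (r k))
      = (∏ k, vdm n (c k) (r k)) • ιMulti ℚ a (fun k => sbv n (r k)) := by
    exact MultilinearMap.map_smul_univ _ _ _
  rw [this]
  exact Submodule.smul_mem _ _ (basis_wedge_mem n a r)

set_option maxHeartbeats 1000000 in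
theorem skew_bollobas_exact (m a b : ℕ) (X Y : Fin m → Finset ℕ)
    (hdisj : ∀ i, Disjoint (X i) (Y i))
    (hskew : ∀ i j : Fin m, i < j → (X i ∩ Y j).Nonempty)
    (hX : ∀ i, (X i).card = a) (hY : ∀ i, (Y i).card = b) :
    m ≤ (a + b).choose a := by
  classical
  set n := a + b with hn
  -- enumerations
  set ux : ∀ i : Fin m, Fin a → ℕ := fun i k => ((X i).orderIsoOfFin (hX i) k : ℕ) with hux
  set uy : ∀ i : Fin m, Fin b → ℕ := fun i k => ((Y i).orderIsoOfFin (hY i) k : ℕ) with huy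
  have hux_mem : ∀ i k, ux i k ∈ X i := fun i k => ((X i).orderIsoOfFin (hX i) k).2
  have huy_mem : ∀ i k, uy i k ∈ Y i := fun i k => ((Y i).orderIsoOfFin (hY i) k).2
  set w : Fin m → ExteriorAlgebra ℚ (Fin n → ℚ) :=
    fun i => ιMulti ℚ a (fun k => vdm n (ux i k)) with hw
  set z : Fin m → ExteriorAlgebra ℚ (Fin n → ℚ) :=
    fun i => ιMulti ℚ b (fun k => vdm n (uy i k)) with hz
  -- the appended index family
  have happ : ∀ i j, w i * z j
      = ιMulti ℚ n (fun k => vdm n (Fin.append (ux i) (uy j) k)) := by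
    intro i j
    rw [hw, hz, iMulti_mul]
    congr 1
    funext k
    refine Fin.addCases (fun k => ?_) (fun k => ?_) k <;>
      simp [Fin.append_left, Fin.append_right]
  -- vanishing for i < j
  have hwz0 : ∀ i j, i < j → w i * z j = 0 := by
    intro i j hij
    obtain ⟨x, hx⟩ := hskew i j hij
    rw [Finset.mem_inter] at hx
    obtain ⟨k1, hk1⟩ : ∃ k, ux i k = x :=
      ⟨((X i).orderIsoOfFin (hX i)).symm ⟨x, hx.1⟩,
        congrArg Subtype.val (((X i).orderIsoOfFin (hX i)).apply_symm_apply ⟨x, hx.1⟩)⟩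
    obtain ⟨k2, hk2⟩ : ∃ k, uy j k = x :=
      ⟨((Y j).orderIsoOfFin (hY j)).symm ⟨x, hx.2⟩,
        congrArg Subtype.val (((Y j).orderIsoOfFin (hY j)).apply_symm_apply ⟨x, hx.2⟩)⟩
    rw [happ]
    apply AlternatingMap.map_eq_zero_of_eq _ _
      (i := Fin.castAdd b k1) (j := Fin.natAdd a k2)
    · rw [Fin.append_left, Fin.append_right, hk1, hk2]
    · intro h
      have h1 : (Fin.castAdd b k1 : ℕ) < a := k1.2
      have h2 : a ≤ (Fin.natAdd a k2 : ℕ) := Nat.le_add_right a k2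
      rw [h] at h1
      exact absurd h2 (not_le.2 h1)
  -- nonvanishing on the diagonal
  have hwzD : ∀ i, Dmap n (w i * z i) ≠ 0 := by
    intro i
    rw [happ]
    apply Dmap_vdm_ne
    intro k l
    refine Fin.addCases (fun k => Fin.addCases (fun l hkl => ?_) (fun l hkl => ?_) l)
      (fun k => Fin.addCases (fun l hkl => ?_) (fun l hkl => ?_) l) k
    · rw [Fin.append_left, Fin.append_left] at hkl
      exact congrArg (Fin.castAdd b) (((X i).orderIsoOfFin (hX i)).injective (Subtype.ext hkl))
    · rw [Fin.append_left, Fin.append_right] at hkl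
      exact absurd (hkl ▸ hux_mem i k)
        (fun hmem => Finset.disjoint_left.1 (hdisj i) hmem (huy_mem i l))
    · rw [Fin.append_right, Fin.append_left] at hkl
      exact absurd (hkl ▸ huy_mem i k)
        (fun hmem => Finset.disjoint_left.1 (hdisj i) (hux_mem i l) hmem)
    · rw [Fin.append_right, Fin.append_right] at hkl
      exact congrArg (Fin.natAdd a) (((Y i).orderIsoOfFin (hY i)).injective (Subtype.ext hkl))
  -- linear independence
  have hli : LinearIndependent ℚ w := by
    rw [Fintype.linearIndependent_iff]
    intro gc hg
    by_contra hne
    push_neg at hne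
    obtain ⟨i1, hi1⟩ := hne
    set S : Finset (Fin m) := Finset.univ.filter (fun i => gc i ≠ 0) with hS
    have hSne : S.Nonempty := ⟨i1, Finset.mem_filter.2 ⟨Finset.mem_univ _, hi1⟩⟩
    set i0 := S.max' hSne with hi0
    have hgi0 : gc i0 ≠ 0 := (Finset.mem_filter.1 (S.max'_mem hSne)).2
    have h0 : ∑ i, gc i • (w i * z i0) = gc i0 • (w i0 * z i0) := by
      refine Finset.sum_eq_single i0 (fun i _ hne' => ?_)
        (fun h => absurd (Finset.mem_univ i0) h)
      rcases lt_or_gt_of_ne hne' with h | h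
      · rw [hwz0 i i0 h, smul_zero]
      · have : gc i = 0 := by
          by_contra hgc
          exact absurd (S.le_max' i (Finset.mem_filter.2 ⟨Finset.mem_univ _, hgc⟩))
            (not_le.2 h)
        rw [this, zero_smul]
    have h1 : (∑ i, gc i • w i) * z i0 = ∑ i, gc i • (w i * z i0) := by
      rw [Finset.sum_mul]
      exact Finset.sum_congr rfl fun i _ => smul_mul_assoc _ _ _
    rw [hg, zero_mul] at h1
    have h2 : gc i0 • (w i0 * z i0) = 0 := by rw [← h0, ← h1]
    have h3 := congrArg (Dmap n) h2
    rw [map_smul, map_zero] at h3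
    rcases smul_eq_zero.1 h3 with h | h
    · exact hgi0 h
    · exact hwzD i0 h
  -- counting
  have hrange : Set.range w ⊆
      SetLike.coe (Submodule.span ℚ
        ((TSet n a : Finset (ExteriorAlgebra ℚ (Fin n → ℚ))) : Set _)) := by
    rintro _ ⟨i, rfl⟩
    exact wedge_mem_span n a (ux i)
  have hcard := linearIndependent_le_span' w hli ((TSet n a : Finset _) : Set _) hrange
  rw [Cardinal.mk_fin] at hcard
  have hm : m ≤ (TSet n a).card := by
    have : (m : Cardinal.{0}) ≤ ((TSet n a).card : Cardinal.{0}) := by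
      simpa [Fintype.card_coe] using hcard
    exact_mod_cast this
  calc m ≤ (TSet n a).card := hm
    _ ≤ (Finset.powersetCard a (Finset.univ : Finset (Fin n))).card :=
        Finset.card_image_le
    _ = (a + b).choose a := by
        rw [Finset.card_powersetCard, Finset.card_univ, Fintype.card_fin]


/-- Skew Bollobás inequality (Frankl, Lovász): if `(X i, Y i)` is a skew Bollobás system
with `|X i| ≤ a` and `|Y i| ≤ b`, then `m ≤ (a + b).choose a`. -/
theorem skew_bollobas (m a b : ℕ) (X Y : Fin m → Finset ℕ)
    (hdisj : ∀ i, Disjoint (X i) (Y i))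
    (hskew : ∀ i j : Fin m, i < j → (X i ∩ Y j).Nonempty)
    (hX : ∀ i, (X i).card ≤ a) (hY : ∀ i, (Y i).card ≤ b) :
    m ≤ (a + b).choose a := by
  classical
  set N : ℕ := (Finset.univ.sup (fun i : Fin m => (X i ∪ Y i).sup id)) + 1 with hN
  have hlt : ∀ i : Fin m, ∀ x, x ∈ X i ∪ Y i → x < N := by
    intro i x hx
    have h1 : id x ≤ (X i ∪ Y i).sup id := Finset.le_sup hx
    have h2 : (X i ∪ Y i).sup id ≤ Finset.univ.sup (fun i : Fin m => (X i ∪ Y i).sup id) :=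
      Finset.le_sup (f := fun i : Fin m => (X i ∪ Y i).sup id) (Finset.mem_univ i)
    simp only [id] at h1
    omega
  set pX : Fin m → Finset ℕ :=
    fun i => (Finset.range (a - (X i).card)).image (fun t => N + t) with hpX
  set pY : Fin m → Finset ℕ :=
    fun i => (Finset.range (b - (Y i).card)).image (fun t => N + a + t) with hpY
  have hpX_mem : ∀ i x, x ∈ pX i → N ≤ x ∧ x < N + a := by
    intro i x hx
    simp only [hpX, Finset.mem_image, Finset.mem_range] at hx
    obtain ⟨t, ht, rfl⟩ := hx
    have := hX i
    omega
  have hpY_mem : ∀ i x, x ∈ pY i → N + a ≤ x := by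
    intro i x hx
    simp only [hpY, Finset.mem_image, Finset.mem_range] at hx
    obtain ⟨t, ht, rfl⟩ := hx
    omega
  set X' : Fin m → Finset ℕ := fun i => X i ∪ pX i with hX'
  set Y' : Fin m → Finset ℕ := fun i => Y i ∪ pY i with hY'
  have hXlt : ∀ i x, x ∈ X i → x < N := fun i x hx => hlt i x (Finset.mem_union_left _ hx)
  have hYlt : ∀ i x, x ∈ Y i → x < N := fun i x hx => hlt i x (Finset.mem_union_right _ hx)
  have hX'c : ∀ i, (X' i).card = a := by
    intro i
    rw [hX', Finset.card_union_of_disjoint (Finset.disjoint_left.2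
      (fun x hx hx' => absurd (hpX_mem i x hx').1 (not_le.2 (hXlt i x hx))))]
    rw [hpX, Finset.card_image_of_injective _ (fun s t h => by omega), Finset.card_range]
    have := hX i; omega
  have hY'c : ∀ i, (Y' i).card = b := by
    intro i
    rw [hY', Finset.card_union_of_disjoint (Finset.disjoint_left.2
      (fun x hx hx' => absurd (hpY_mem i x hx') (not_le.2 (by
        have := hYlt i x hx; omega))))]
    rw [hpY, Finset.card_image_of_injective _ (fun s t h => by omega), Finset.card_range]
    have := hY i; omega
  have hdisj' : ∀ i, Disjoint (X' i) (Y' i) := by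
    intro i
    rw [Finset.disjoint_left]
    intro x hx hy
    rw [hX', Finset.mem_union] at hx
    rw [hY', Finset.mem_union] at hy
    rcases hx with hx | hx <;> rcases hy with hy | hy
    · exact Finset.disjoint_left.1 (hdisj i) hx hy
    · exact absurd (hpY_mem i x hy) (by have := hXlt i x hx; omega)
    · exact absurd (hpX_mem i x hx).1 (not_le.2 (hYlt i x hy))
    · have h1 := hpX_mem i x hx
      have h2 := hpY_mem i x hy
      omega
  have hskew' : ∀ i j : Fin m, i < j → (X' i ∩ Y' j).Nonempty := by
    intro i j hij
    obtain ⟨x, hx⟩ := hskew i j hij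
    rw [Finset.mem_inter] at hx
    exact ⟨x, Finset.mem_inter.2 ⟨Finset.mem_union_left _ hx.1, Finset.mem_union_left _ hx.2⟩⟩
  exact skew_bollobas_exact m a b X' Y' hdisj' hskew' hX'c hY'c
end

section
/- For k ≥ 3 and n ≥ 2k, the family F = {∅,[n]} ∪ A_1 ∪ A_2 ∪ A_{1,2} ∪ (A_1 ∪ A_2 ∪ A_{1,2})^c ⊆ 2^{[n]}, with A_1 = nonempty subsets of [k], A_2 = nonempty subsets of [k+1,2k-1], A_{1,2} = { [k] ∪ A : A ∈ A_2 }, contains no induced copy of 2C_k + C_1: there do not exist two incomparable k-chains in F together with a further set of F incomparable to all sets of both chains. -/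
/-- The family `A_1` of nonempty subsets of `[k]`. -/
def famA1 (k : ℕ) : Finset (Finset ℕ) := (Finset.Icc 1 k).powerset.erase ∅

/-- The family `A_2` of nonempty subsets of `[k+1, 2k-1]`. -/
def famA2 (k : ℕ) : Finset (Finset ℕ) := (Finset.Icc (k + 1) (2 * k - 1)).powerset.erase ∅

/-- The family `A_{1,2} = { [k] ∪ A : A ∈ A_2 }`. -/
def famA12 (k : ℕ) : Finset (Finset ℕ) := (famA2 k).image (fun A => Finset.Icc 1 k ∪ A)

/-- The saturating family for `2C_k + C_1`. -/
def famCk (k n : ℕ) : Finset (Finset ℕ) :=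
  {∅, Finset.Icc 1 n} ∪ (famA1 k ∪ famA2 k ∪ famA12 k)
    ∪ (famA1 k ∪ famA2 k ∪ famA12 k).image (fun A => Finset.Icc 1 n \ A)

/-!
Every member of the family contains all of `[2k, n]` or none of it, so intersecting with `[2k]`
embeds the family into the boundary of `2^X × 2^Y` for `X = [k]`, `Y = [k+1, 2k]`: the sets
`S ⊆ X ∪ Y` with `S ⊆ X`, `S ⊆ Y`, `X ⊆ S` or `Y ⊆ S`. Counting cardinalities along a `k`-chain
shows that its bottom lies inside `X` or `Y` and its top contains `X` or `Y`; by the symmetry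
`X ↔ Y`, let the bottom of the first chain lie inside `X`. If its top contains `X`, the second
chain has to run from inside `Y` to a superset of `Y`, and every set of the family is comparable
to one of the four endpoints. If its top contains `Y`, every set involved lies in
`2^X × {∅, Y}`, a Boolean lattice of rank `k + 1`. There a `k`-chain of proper nonempty sets runs
from a singleton to a coatom, so the extra set, not being below the top of the second chain,
contains the one point that this top misses, which is the point of the bottom of the first chain.
-/

open Finset

theorem StrictMono.apply_bot_add_le_apply_top {k : ℕ} [NeZero k] {f : Fin k → ℕ}
    (hf : StrictMono f) : f ⊥ + (k - 1) ≤ f ⊤ := by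
  have himage : univ.image f ⊆ Icc (f ⊥) (f ⊤) := fun _ hx => by
    obtain ⟨i, -, rfl⟩ := mem_image.1 hx
    exact mem_Icc.2 ⟨hf.monotone bot_le, hf.monotone le_top⟩
  have hcard := card_le_card himage
  rw [card_image_of_injective _ hf.injective, card_univ, Fintype.card_fin, Nat.card_Icc] at hcard
  have : f ⊥ ≤ f ⊤ := hf.monotone bot_le
  omega

/-- An induced copy of `2C_k + C_1` in `s`. -/
structure Induced2CkC1 {β : Type*} [Preorder β] (k : ℕ) (s : Set β) where
  A : Fin k → β
  B : Fin k → β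
  E : β
  A_mem : ∀ i, A i ∈ s
  B_mem : ∀ i, B i ∈ s
  E_mem : E ∈ s
  strictMono_A : StrictMono A
  strictMono_B : StrictMono B
  incomp_A_B : ∀ i j, IncompRel (· ≤ ·) (A i) (B j)
  incomp_A_E : ∀ i, IncompRel (· ≤ ·) (A i) E
  incomp_B_E : ∀ i, IncompRel (· ≤ ·) (B i) E

namespace Induced2CkC1

section Preorder
variable {β γ : Type*} [Preorder β] [Preorder γ] {k : ℕ} {s : Set β}

def swap (c : Induced2CkC1 k s) : Induced2CkC1 k s where
  A := c.B
  B := c.A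
  E := c.E
  A_mem := c.B_mem
  B_mem := c.A_mem
  E_mem := c.E_mem
  strictMono_A := c.strictMono_B
  strictMono_B := c.strictMono_A
  incomp_A_B i j := (c.incomp_A_B j i).symm
  incomp_A_E := c.incomp_B_E
  incomp_B_E := c.incomp_A_E

def restrict (c : Induced2CkC1 k s) (t : Set β) (hA : ∀ i, c.A i ∈ t) (hB : ∀ i, c.B i ∈ t)
    (hE : c.E ∈ t) : Induced2CkC1 k t :=
  { c with A_mem := hA, B_mem := hB, E_mem := hE }

def map {t : Set γ} (c : Induced2CkC1 k s) (f : β → γ)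
    (hf : ∀ a ∈ s, ∀ b ∈ s, f a ≤ f b ↔ a ≤ b) (hst : Set.MapsTo f s t) :
    Induced2CkC1 k t where
  A := f ∘ c.A
  B := f ∘ c.B
  E := f c.E
  A_mem i := hst (c.A_mem i)
  B_mem i := hst (c.B_mem i)
  E_mem := hst c.E_mem
  strictMono_A i j hij := by
    simpa only [Function.comp, lt_iff_le_not_ge, hf _ (c.A_mem _) _ (c.A_mem _)]
      using c.strictMono_A hij
  strictMono_B i j hij := by
    simpa only [Function.comp, lt_iff_le_not_ge, hf _ (c.B_mem _) _ (c.B_mem _)]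
      using c.strictMono_B hij
  incomp_A_B i j := by
    simpa only [Function.comp, IncompRel, hf _ (c.A_mem _) _ (c.B_mem _),
      hf _ (c.B_mem _) _ (c.A_mem _)] using c.incomp_A_B i j
  incomp_A_E i := by
    simpa only [Function.comp, IncompRel, hf _ (c.A_mem _) _ c.E_mem,
      hf _ c.E_mem _ (c.A_mem _)] using c.incomp_A_E i
  incomp_B_E i := by
    simpa only [Function.comp, IncompRel, hf _ (c.B_mem _) _ c.E_mem,
      hf _ c.E_mem _ (c.B_mem _)] using c.incomp_B_E i

end Preorder

variable {α : Type*} {k : ℕ} {s : Set (Finset α)}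

theorem A_nonempty (c : Induced2CkC1 k s) (i : Fin k) : (c.A i).Nonempty :=
  nonempty_iff_ne_empty.2 fun h => (c.incomp_A_E i).1 (h ▸ empty_subset _)

theorem A_ssubset {U : Finset α} (c : Induced2CkC1 k s) (hs : s ⊆ Set.Iic U) (i : Fin k) :
    c.A i ⊂ U :=
  ssubset_of_subset_of_ne (hs (c.A_mem i)) fun h => (c.incomp_A_E i).2 (h ▸ hs c.E_mem)

theorem card_bot_add_le_card_top [NeZero k] (c : Induced2CkC1 k s) :
    (c.A ⊥).card + (k - 1) ≤ (c.A ⊤).card :=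
  (card_strictMono.comp c.strictMono_A).apply_bot_add_le_apply_top

end Induced2CkC1

theorem isEmpty_induced2CkC1_Iic {α : Type*} [DecidableEq α] {k : ℕ} [NeZero k] {Z : Finset α}
    (hZ : Z.card = k + 1) : IsEmpty (Induced2CkC1 k (Set.Iic Z)) := by
  refine ⟨fun c => ?_⟩
  have hA := c.card_bot_add_le_card_top
  have hB : (c.B ⊥).card + (k - 1) ≤ (c.B ⊤).card := c.swap.card_bot_add_le_card_top
  have hA_top : (c.A ⊤).card < Z.card := card_lt_card (c.A_ssubset subset_rfl ⊤)
  have hB_bot : 0 < (c.B ⊥).card := (c.swap.A_nonempty ⊥).card_pos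
  have hA_bot : (c.A ⊥).card ≤ 1 := by omega
  have hZB : (Z \ c.B ⊤).card ≤ 1 := by
    rw [card_sdiff_of_subset (c.B_mem ⊤)]
    omega
  obtain ⟨a, ha, haB⟩ := not_subset.1 (c.incomp_A_B ⊥ ⊤).1
  obtain ⟨e, he, heB⟩ := not_subset.1 (c.incomp_B_E ⊤).2
  have hae : a = e :=
    card_le_one.1 hZB _ (mem_sdiff.2 ⟨c.A_mem ⊥ ha, haB⟩) _ (mem_sdiff.2 ⟨c.E_mem he, heB⟩)
  refine (c.incomp_A_E ⊥).1 fun x hx => ?_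
  rwa [card_le_one.1 hA_bot x hx a ha, hae]

section Boundary
variable {α : Type*} [DecidableEq α] {k : ℕ}

def boundaryFamily (X Y : Finset α) : Set (Finset α) :=
  {S | S ⊆ X ∪ Y ∧ (S ⊆ X ∨ S ⊆ Y ∨ X ⊆ S ∨ Y ⊆ S)}

/-- `2^X × {∅, Y}`, which `S ↦ S ∩ insert y X` (for `y ∈ Y`) identifies with `2^(insert y X)`. -/
def blockFamily (X Y : Finset α) : Set (Finset α) := {S | S ⊆ X ∪ Y ∧ (S ⊆ X ∨ Y ⊆ S)}

variable {X Y : Finset α}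

theorem boundaryFamily_comm (X Y : Finset α) : boundaryFamily X Y = boundaryFamily Y X := by
  ext S
  simp only [boundaryFamily, Set.mem_ofPred_eq, union_comm X Y]
  tauto

theorem sdiff_mem_boundaryFamily (hXY : Disjoint X Y) {S : Finset α}
    (hS : S ∈ boundaryFamily X Y) : (X ∪ Y) \ S ∈ boundaryFamily X Y := by
  refine ⟨sdiff_subset, ?_⟩
  rcases hS.2 with h | h | h | h
  · exact .inr (.inr (.inr (subset_sdiff.2 ⟨subset_union_right, (hXY.mono_left h).symm⟩)))
  · exact .inr (.inr (.inl (subset_sdiff.2 ⟨subset_union_left, hXY.mono_right h⟩)))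
  · exact .inr (.inl (sdiff_le_iff.2 (union_subset_union h subset_rfl)))
  · exact .inl (sdiff_le_iff.2 (union_subset subset_union_right (h.trans subset_union_left)))

theorem inter_insert_subset_inter_insert_iff (hXY : Disjoint X Y) {y : α} (hy : y ∈ Y)
    {S S' : Finset α} (hS : S ∈ blockFamily X Y) (hS' : S' ∈ blockFamily X Y) :
    S ∩ insert y X ⊆ S' ∩ insert y X ↔ S ⊆ S' := by
  refine ⟨fun h x hx => ?_, inter_subset_inter_right⟩
  by_cases hxX : x ∈ X
  · exact (mem_inter.1 (h (mem_inter.2 ⟨hx, mem_insert_of_mem hxX⟩))).1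
  have hyX : y ∉ X := disjoint_right.1 hXY hy
  have hYS : Y ⊆ S := hS.2.resolve_left fun hSX => hxX (hSX hx)
  have hyS' : y ∈ S' := (mem_inter.1 (h (mem_inter.2 ⟨hYS hy, mem_insert_self y X⟩))).1
  have hYS' : Y ⊆ S' := hS'.2.resolve_left fun hS'X => hyX (hS'X hyS')
  exact hYS' ((mem_union.1 (hS.1 hx)).resolve_left hxX)

namespace Induced2CkC1
variable [NeZero k] (c : Induced2CkC1 k (boundaryFamily X Y))

theorem bot_subset_or (hX : X.card = k) (hY : Y.card = k) (hXY : Disjoint X Y) :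
    c.A ⊥ ⊆ X ∨ c.A ⊥ ⊆ Y := by
  have hchain := c.card_bot_add_le_card_top
  have htop : (c.A ⊤).card < (X ∪ Y).card := card_lt_card (c.A_ssubset (fun _ hS => hS.1) ⊤)
  rw [card_union_of_disjoint hXY] at htop
  rcases (c.A_mem ⊥).2 with h | h | h | h
  · exact .inl h
  · exact .inr h
  · exact .inl (eq_of_subset_of_card_le h (by omega)).ge
  · exact .inr (eq_of_subset_of_card_le h (by omega)).ge

theorem subset_top_or (hX : X.card = k) (hY : Y.card = k) : X ⊆ c.A ⊤ ∨ Y ⊆ c.A ⊤ := by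
  have hchain := c.card_bot_add_le_card_top
  have hbot := (c.A_nonempty ⊥).card_pos
  rcases (c.A_mem ⊤).2 with h | h | h | h
  · exact .inl (eq_of_subset_of_card_le h (by omega)).ge
  · exact .inr (eq_of_subset_of_card_le h (by omega)).ge
  · exact .inl h
  · exact .inr h

theorem not_left_subset_top_of_bot_subset_left (hX : X.card = k) (hY : Y.card = k)
    (hXY : Disjoint X Y) (hbot : c.A ⊥ ⊆ X) : ¬ X ⊆ c.A ⊤ := by
  intro htop
  have hB_bot : c.B ⊥ ⊆ Y := (c.swap.bot_subset_or hX hY hXY).resolve_left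
    fun h => (c.incomp_A_B ⊤ ⊥).2 (h.trans htop)
  have hB_top : Y ⊆ c.B ⊤ := (c.swap.subset_top_or hX hY).resolve_left
    fun h => (c.incomp_A_B ⊥ ⊤).1 (hbot.trans h)
  rcases c.E_mem.2 with h | h | h | h
  · exact (c.incomp_A_E ⊤).2 (h.trans htop)
  · exact (c.incomp_B_E ⊤).2 (h.trans hB_top)
  · exact (c.incomp_A_E ⊥).1 (hbot.trans h)
  · exact (c.incomp_B_E ⊥).1 (hB_bot.trans h)

theorem not_right_subset_top_of_bot_subset_left (hX : X.card = k) (hXY : Disjoint X Y)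
    (hY : Y.Nonempty) (hbot : c.A ⊥ ⊆ X) : ¬ Y ⊆ c.A ⊤ := by
  intro htop
  have hmem : ∀ S ∈ boundaryFamily X Y, ¬ S ⊆ Y → ¬ X ⊆ S → S ∈ blockFamily X Y :=
    fun S hS hSY hXS => ⟨hS.1, hS.2.imp_right fun h => (h.resolve_left hSY).resolve_left hXS⟩
  have hA : ∀ i, c.A i ∈ blockFamily X Y := fun i => by
    refine hmem _ (c.A_mem i) (fun hAY => ?_) fun hXA => ?_
    · exact (c.A_nonempty ⊥).ne_empty <| disjoint_self.1 <|
        hXY.mono hbot ((c.strictMono_A.monotone bot_le).trans hAY)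
    · exact (c.A_ssubset (fun _ hS => hS.1) ⊤).not_subset <|
        union_subset (hXA.trans (c.strictMono_A.monotone le_top)) htop
  have hB : ∀ i, c.B i ∈ blockFamily X Y := fun i =>
    hmem _ (c.B_mem i) (fun h => (c.incomp_A_B ⊤ i).2 (h.trans htop))
      fun h => (c.incomp_A_B ⊥ i).1 (hbot.trans h)
  have hE : c.E ∈ blockFamily X Y :=
    hmem _ c.E_mem (fun h => (c.incomp_A_E ⊤).2 (h.trans htop))
      fun h => (c.incomp_A_E ⊥).1 (hbot.trans h)
  obtain ⟨y, hy⟩ := hY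
  have hZ : (insert y X).card = k + 1 := hX ▸ card_insert_of_notMem (disjoint_right.1 hXY hy)
  exact (isEmpty_induced2CkC1_Iic hZ).false <| (c.restrict _ hA hB hE).map (· ∩ insert y X)
    (fun _ hS _ hS' => inter_insert_subset_inter_insert_iff hXY hy hS hS')
    fun _ _ => inter_subset_right

theorem not_bot_subset_left (hX : X.card = k) (hY : Y.card = k) (hXY : Disjoint X Y) :
    ¬ c.A ⊥ ⊆ X := fun hbot =>
  (c.subset_top_or hX hY).elim (c.not_left_subset_top_of_bot_subset_left hX hY hXY hbot)
    (c.not_right_subset_top_of_bot_subset_left hX hXY (card_pos.1 (hY ▸ NeZero.pos k)) hbot)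

end Induced2CkC1

theorem isEmpty_induced2CkC1_boundaryFamily [NeZero k] (hX : X.card = k) (hY : Y.card = k)
    (hXY : Disjoint X Y) : IsEmpty (Induced2CkC1 k (boundaryFamily X Y)) := by
  refine ⟨fun c => (c.bot_subset_or hX hY hXY).elim (c.not_bot_subset_left hX hY hXY) ?_⟩
  have hcomm := (boundaryFamily_comm X Y).subset
  exact (c.restrict _ (fun i => hcomm (c.A_mem i)) (fun i => hcomm (c.B_mem i))
    (hcomm c.E_mem)).not_bot_subset_left hY hX hXY.symm

end Boundary

section famCk
variable {k n : ℕ} {S : Finset ℕ}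

theorem disjoint_Icc_Icc_of_lt {a b c d : ℕ} (h : b < c) : Disjoint (Icc a b) (Icc c d) :=
  disjoint_left.2 fun x hx hx' => by
    have := mem_Icc.1 hx
    have := mem_Icc.1 hx'
    omega

theorem exists_mem_boundaryFamily_of_mem_famCk (hS : S ∈ famCk k n) :
    ∃ a ∈ boundaryFamily (Icc 1 k) (Icc (k + 1) (2 * k)), 2 * k ∉ a ∧
      (S = a ∨ S = Icc 1 n \ a) := by
  have hempty : ∅ ∈ boundaryFamily (Icc 1 k) (Icc (k + 1) (2 * k)) :=
    ⟨empty_subset _, .inl (empty_subset _)⟩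
  have hgen : ∀ a ∈ famA1 k ∪ famA2 k ∪ famA12 k,
      a ∈ boundaryFamily (Icc 1 k) (Icc (k + 1) (2 * k)) ∧ 2 * k ∉ a := by
    simp only [famA1, famA2, famA12, mem_union, mem_erase, mem_powerset, mem_image]
    rintro a ((⟨-, ha⟩ | ⟨-, ha⟩) | ⟨q, ⟨-, hq⟩, rfl⟩)
    · refine ⟨⟨ha.trans subset_union_left, .inl ha⟩, fun h => ?_⟩
      have := mem_Icc.1 (ha h)
      omega
    · have haY : a ⊆ Icc (k + 1) (2 * k) := ha.trans (Icc_subset_Icc_right (by omega))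
      refine ⟨⟨haY.trans subset_union_right, .inr (.inl haY)⟩, fun h => ?_⟩
      have := mem_Icc.1 (ha h)
      omega
    · have hqY : q ⊆ Icc (k + 1) (2 * k) := hq.trans (Icc_subset_Icc_right (by omega))
      refine ⟨⟨union_subset_union subset_rfl hqY, .inr (.inr (.inl subset_union_left))⟩, ?_⟩
      simp only [mem_union, mem_Icc, not_or]
      exact ⟨by omega, fun h => by have := mem_Icc.1 (hq h); omega⟩
  rw [famCk, mem_union, mem_union, mem_insert, mem_singleton, mem_image] at hS
  rcases hS with ((rfl | rfl) | hS) | ⟨a, ha, rfl⟩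
  · exact ⟨∅, hempty, notMem_empty _, .inl rfl⟩
  · exact ⟨∅, hempty, notMem_empty _, .inr sdiff_empty.symm⟩
  · exact ⟨S, (hgen S hS).1, (hgen S hS).2, .inl rfl⟩
  · exact ⟨a, (hgen a ha).1, (hgen a ha).2, .inr rfl⟩

theorem inter_mem_boundaryFamily_of_mem_famCk (hn : 2 * k ≤ n) (hS : S ∈ famCk k n) :
    S ∩ (Icc 1 k ∪ Icc (k + 1) (2 * k)) ∈ boundaryFamily (Icc 1 k) (Icc (k + 1) (2 * k)) := by
  obtain ⟨a, ha, -, rfl | rfl⟩ := exists_mem_boundaryFamily_of_mem_famCk hS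
  · rwa [inter_eq_left.2 ha.1]
  · have hU : Icc 1 k ∪ Icc (k + 1) (2 * k) ⊆ Icc 1 n := union_subset
      (Icc_subset_Icc_right (by omega)) (Icc_subset_Icc (by omega) hn)
    have hsdiff : (Icc 1 n \ a) ∩ (Icc 1 k ∪ Icc (k + 1) (2 * k))
        = (Icc 1 k ∪ Icc (k + 1) (2 * k)) \ a := by
      ext x
      have := @hU x
      simp only [mem_inter, mem_sdiff]
      tauto
    rw [hsdiff]
    exact sdiff_mem_boundaryFamily (disjoint_Icc_Icc_of_lt k.lt_succ_self) ha

theorem mem_famCk_iff_of_notMem (hk : 0 < k) (hn : 2 * k ≤ n) (hS : S ∈ famCk k n) {x : ℕ}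
    (hx : x ∉ Icc 1 k ∪ Icc (k + 1) (2 * k)) : x ∈ S ↔ 2 * k ∈ S ∧ x ∈ Icc 1 n := by
  obtain ⟨a, ha, h2k, rfl | rfl⟩ := exists_mem_boundaryFamily_of_mem_famCk hS
  · simp only [h2k, false_and, iff_false]
    exact fun h => hx (ha.1 h)
  · have h2kN : 2 * k ∈ Icc 1 n := mem_Icc.2 ⟨by omega, hn⟩
    simp only [mem_sdiff, h2kN, h2k, not_false_eq_true, and_self, true_and,
      and_iff_left_iff_imp]
    exact fun _ h => hx (ha.1 h)

theorem inter_subset_inter_iff_of_mem_famCk (hk : 0 < k) (hn : 2 * k ≤ n) {S' : Finset ℕ}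
    (hS : S ∈ famCk k n) (hS' : S' ∈ famCk k n) :
    S ∩ (Icc 1 k ∪ Icc (k + 1) (2 * k)) ⊆ S' ∩ (Icc 1 k ∪ Icc (k + 1) (2 * k)) ↔ S ⊆ S' := by
  refine ⟨fun h x hx => ?_, inter_subset_inter_right⟩
  by_cases hxU : x ∈ Icc 1 k ∪ Icc (k + 1) (2 * k)
  · exact (mem_inter.1 (h (mem_inter.2 ⟨hx, hxU⟩))).1
  have h2kU : 2 * k ∈ Icc 1 k ∪ Icc (k + 1) (2 * k) :=
    mem_union_right _ (mem_Icc.2 ⟨by omega, le_rfl⟩)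
  obtain ⟨h2k, hxN⟩ := (mem_famCk_iff_of_notMem hk hn hS hxU).1 hx
  have h2k' : 2 * k ∈ S' := (mem_inter.1 (h (mem_inter.2 ⟨h2k, h2kU⟩))).1
  exact (mem_famCk_iff_of_notMem hk hn hS' hxU).2 ⟨h2k', hxN⟩

end famCk

/-- The family contains no induced copy of `2C_k + C_1`. -/
theorem famCk_free (k n : ℕ) (hk : 3 ≤ k) (hn : 2 * k ≤ n) :
    ¬ ∃ (A B : Fin k → Finset ℕ) (E : Finset ℕ),
      (∀ i, A i ∈ famCk k n) ∧ (∀ i, B i ∈ famCk k n) ∧ E ∈ famCk k n ∧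
      (∀ i j : Fin k, i < j → A i ⊂ A j) ∧
      (∀ i j : Fin k, i < j → B i ⊂ B j) ∧
      (∀ i j : Fin k, ¬ A i ⊆ B j ∧ ¬ B j ⊆ A i) ∧
      (∀ i, ¬ A i ⊆ E ∧ ¬ E ⊆ A i) ∧
      (∀ i, ¬ B i ⊆ E ∧ ¬ E ⊆ B i) := by
  rintro ⟨A, B, E, hA, hB, hE, hAc, hBc, hAB, hAE, hBE⟩
  have : NeZero k := ⟨by omega⟩
  let c : Induced2CkC1 k (famCk k n : Set (Finset ℕ)) :=
    ⟨A, B, E, hA, hB, hE, hAc, hBc, hAB, hAE, hBE⟩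
  have hX : (Icc 1 k).card = k := by simp
  have hY : (Icc (k + 1) (2 * k)).card = k := by rw [Nat.card_Icc]; omega
  have hXY := disjoint_Icc_Icc_of_lt (a := 1) (d := 2 * k) k.lt_succ_self
  exact (isEmpty_induced2CkC1_boundaryFamily hX hY hXY).false <|
    c.map (· ∩ (Icc 1 k ∪ Icc (k + 1) (2 * k)))
      (fun _ hS _ hS' => inter_subset_inter_iff_of_mem_famCk (by omega) hn hS hS')
      fun _ hS => inter_mem_boundaryFamily_of_mem_famCk hn hS
end

section
/- Let n ≥ 4 and F = {∅, [n]} ∪ { {i} : i ∈ [n] } ∪ { {u,v} : u ∈ {1,2}, v ∈ [3,n] } ⊆ 2^{[n]}. Then F contains no induced copy of the Boolean lattice B_3: there are no 8 sets in F forming an inclusion-isomorphic copy of the subset lattice of a 3-element set. -/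
/-- The family `{∅, [n]} ∪ singletons ∪ { {u,v} : u ∈ {1,2}, v ∈ [3,n] }`. -/
def famB3 (n : ℕ) : Set (Finset ℕ) :=
  {∅, Finset.Icc 1 n} ∪ {S | ∃ i ∈ Finset.Icc 1 n, S = {i}}
    ∪ {S | ∃ u ∈ ({1, 2} : Finset ℕ), ∃ v ∈ Finset.Icc 3 n, S = {u, v}}

/-- A family of finsets contains an induced copy of the Boolean lattice `B_3`. -/
def HasB3 (𝒢 : Set (Finset ℕ)) : Prop :=
  ∃ f : Finset (Fin 3) → Finset ℕ,
    (∀ s, f s ∈ 𝒢) ∧ (∀ s t : Finset (Fin 3), s ⊆ t ↔ f s ⊆ f t)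

lemma famB3_card {n : ℕ} {S : Finset ℕ} (hS : S ∈ famB3 n) :
    S.card = 0 ∨ S.card = 1 ∨ S.card = 2 ∨ S.card = n := by
  rcases hS with ((h | h) | ⟨i, hi, rfl⟩) | ⟨u, hu, v, hv, rfl⟩
  · left; subst h; simp
  · right; right; right; subst h; simp
  · right; left; simp
  · right; right; left
    simp only [Finset.mem_insert, Finset.mem_singleton] at hu
    simp only [Finset.mem_Icc] at hv
    have : u ≠ v := by omega
    rw [Finset.card_insert_of_notMem (by simp [this]), Finset.card_singleton]

lemma famB3_pair {n : ℕ} (hn : 4 ≤ n) {S : Finset ℕ} (hS : S ∈ famB3 n)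
    (hc : S.card = 2) :
    ∃ u v : ℕ, u ≤ 2 ∧ 3 ≤ v ∧ S = {u, v} := by
  rcases hS with ((h | h) | ⟨i, hi, rfl⟩) | ⟨u, hu, v, hv, rfl⟩
  · simp [h] at hc
  · rw [h] at hc; simp at hc; omega
  · simp at hc
  · simp only [Finset.mem_insert, Finset.mem_singleton] at hu
    simp only [Finset.mem_Icc] at hv
    exact ⟨u, v, by omega, by omega, rfl⟩

/-- The family `famB3` contains no induced copy of `B_3`. -/
theorem famB3_free (n : ℕ) (hn : 4 ≤ n) : ¬ HasB3 (famB3 n) := by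
  rintro ⟨f, hmem, hiff⟩
  have hinj : ∀ s t : Finset (Fin 3), f s = f t → s = t := fun s t h =>
    subset_antisymm ((hiff s t).2 h.le) ((hiff t s).2 h.ge)
  have hss : ∀ s t : Finset (Fin 3), s ⊂ t → f s ⊂ f t := by
    intro s t h
    exact Finset.ssubset_iff_subset_ne.2
      ⟨(hiff s t).1 h.subset, fun he => h.ne (hinj _ _ he)⟩
  have hchain : ∀ i j : Fin 3, i ≠ j →
      (∅ : Finset (Fin 3)) ⊂ {i} ∧ ({i} : Finset (Fin 3)) ⊂ {i, j} ∧
        ({i, j} : Finset (Fin 3)) ⊂ Finset.univ := by decide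
  -- cards of images of singletons and pairs
  have hcards : ∀ i j : Fin 3, i ≠ j → (f {i}).card = 1 ∧ (f {i, j}).card = 2 := by
    intro i j hij
    obtain ⟨h1, h2, h3⟩ := hchain i j hij
    have c1 := Finset.card_lt_card (hss _ _ h1)
    have c2 := Finset.card_lt_card (hss _ _ h2)
    have c3 := Finset.card_lt_card (hss _ _ h3)
    have k0 := famB3_card (hmem ∅)
    have k1 := famB3_card (hmem {i})
    have k2 := famB3_card (hmem {i, j})
    have k3 := famB3_card (hmem Finset.univ)
    omega
  have hex : ∀ i : Fin 3, ∃ a : ℕ, f {i} = {a} := by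
    intro i
    exact Finset.card_eq_one.1 (hcards i (if h : i = 0 then 1 else 0) (by
      split at * <;> simp_all)).1
  choose a ha using hex
  have hakey : ∀ i j : Fin 3, i ≠ j → (a i ≤ 2 ∧ 3 ≤ a j) ∨ (3 ≤ a i ∧ a j ≤ 2) := by
    intro i j hij
    have hane : a i ≠ a j := by
      intro h
      apply hij
      have : ({i} : Finset (Fin 3)) = {j} := hinj _ _ (by rw [ha i, ha j, h])
      simpa using this
    have hsubi : f {i} ⊆ f {i, j} := (hiff _ _).1 (by intro x hx; simp_all)
    have hsubj : f {j} ⊆ f {i, j} := (hiff _ _).1 (by intro x hx; simp_all)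
    have hai : a i ∈ f {i, j} := hsubi (by rw [ha i]; simp)
    have haj : a j ∈ f {i, j} := hsubj (by rw [ha j]; simp)
    obtain ⟨u, v, hu, hv, huv⟩ := famB3_pair hn (hmem {i, j}) (hcards i j hij).2
    rw [huv] at hai haj
    simp only [Finset.mem_insert, Finset.mem_singleton] at hai haj
    rcases hai with rfl | rfl <;> rcases haj with h | h <;> omega
  have h01 := hakey 0 1 (by decide)
  have h02 := hakey 0 2 (by decide)
  have h12 := hakey 1 2 (by decide)
  omega
end

section
/- Let n ≥ 4 and F = {∅,[n]} ∪ { {i} : i ∈ [n] } ∪ { {u,v} : u ∈ {1,2}, v ∈ [3,n] }. For every set G ⊆ [n] with G ∉ F, the family F ∪ {G} contains an induced copy of the Boolean lattice B_3. -/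
lemma mem_fam_empty (n : ℕ) : (∅ : Finset ℕ) ∈ famB3 n := Or.inl (Or.inl (Or.inl rfl))

lemma mem_fam_single (n i : ℕ) (hi : i ∈ Finset.Icc 1 n) : ({i} : Finset ℕ) ∈ famB3 n :=
  Or.inl (Or.inr ⟨i, hi, rfl⟩)

lemma mem_fam_pair (n u v : ℕ) (hu : u = 1 ∨ u = 2) (hv : v ∈ Finset.Icc 3 n) :
    ({u, v} : Finset ℕ) ∈ famB3 n :=
  Or.inr ⟨u, by rcases hu with rfl | rfl <;> simp, v, hv, rfl⟩

lemma mem_fam_pair' (n u v : ℕ) (hu : u = 1 ∨ u = 2) (hv : v ∈ Finset.Icc 3 n) :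
    ({v, u} : Finset ℕ) ∈ famB3 n := by
  rw [Finset.pair_comm]; exact mem_fam_pair n u v hu hv

lemma fsub_pair {G : Finset ℕ} {x y : ℕ} (h : G ⊆ {x, y}) :
    G = ∅ ∨ G = {x} ∨ G = {y} ∨ G = {x, y} := by
  have h' : (G : Set ℕ) ⊆ ({x, y} : Set ℕ) := by
    intro z hz
    have := h hz
    simpa using this
  rcases Set.subset_pair_iff_eq.1 h' with h'' | h'' | h'' | h''
  · exact Or.inl (by apply Finset.coe_injective; simpa using h'')
  · exact Or.inr (Or.inl (by apply Finset.coe_injective; simpa using h''))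
  · exact Or.inr (Or.inr (Or.inl (by apply Finset.coe_injective; simpa using h'')))
  · exact Or.inr (Or.inr (Or.inr (by apply Finset.coe_injective; simpa using h'')))


lemma subset_fin3 (s t : Finset (Fin 3)) :
    s ⊆ t ↔ ((0 ∈ s → 0 ∈ t) ∧ (1 ∈ s → 1 ∈ t) ∧ (2 ∈ s → 2 ∈ t)) := by
  constructor
  · intro h; exact ⟨fun h0 => h h0, fun h1 => h h1, fun h2 => h h2⟩
  · rintro ⟨h0, h1, h2⟩ x hx
    fin_cases x
    · exact h0 hx
    · exact h1 hx
    · exact h2 hx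

lemma key (n : ℕ) (G : Finset ℕ) (hG : G ⊆ Finset.Icc 1 n)
    (a b c : ℕ) (ha : a ∈ G) (hb : b ∈ G) (hc : c ∉ G) (hab : a ≠ b)
    (hcI : c ∈ Finset.Icc 1 n)
    (e1 : ({c, a} : Finset ℕ) ∈ famB3 n) (e2 : ({c, b} : Finset ℕ) ∈ famB3 n) :
    HasB3 (famB3 n ∪ {G}) := by
  have hca : c ≠ a := fun h => hc (h ▸ ha)
  have hcb : c ≠ b := fun h => hc (h ▸ hb)
  have haI : a ∈ Finset.Icc 1 n := hG ha
  have hbI : b ∈ Finset.Icc 1 n := hG hb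
  refine ⟨fun s => if (0:Fin 3) ∈ s then
      (if (1:Fin 3) ∈ s then (if (2:Fin 3) ∈ s then Finset.Icc 1 n else G)
        else if (2:Fin 3) ∈ s then {c, a} else {a})
    else (if (1:Fin 3) ∈ s then (if (2:Fin 3) ∈ s then {c, b} else {b})
        else if (2:Fin 3) ∈ s then {c} else ∅), ?_, ?_⟩
  · intro s
    by_cases h0 : (0:Fin 3) ∈ s <;> by_cases h1 : (1:Fin 3) ∈ s <;>
      by_cases h2 : (2:Fin 3) ∈ s <;> simp only [h0, h1, h2, if_true, if_false]
    · exact Or.inl (by left; left; right; rfl)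
    · exact Or.inr rfl
    · exact Or.inl e1
    · exact Or.inl (Or.inl (Or.inr ⟨a, haI, rfl⟩))
    · exact Or.inl e2
    · exact Or.inl (Or.inl (Or.inr ⟨b, hbI, rfl⟩))
    · exact Or.inl (Or.inl (Or.inr ⟨c, hcI, rfl⟩))
    · exact Or.inl (by left; left; left; rfl)
  · intro s t
    rw [subset_fin3]
    have sab : ¬ ({a} : Finset ℕ) ⊆ {b} := by simp [hab]
    have sba : ¬ ({b} : Finset ℕ) ⊆ {a} := by simp [hab.symm]
    have sac : ¬ ({a} : Finset ℕ) ⊆ {c} := by simp [hca.symm]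
    have sca : ¬ ({c} : Finset ℕ) ⊆ {a} := by simp [hca]
    have sbc : ¬ ({b} : Finset ℕ) ⊆ {c} := by simp [hcb.symm]
    have scb : ¬ ({c} : Finset ℕ) ⊆ {b} := by simp [hcb]
    have saG : ({a} : Finset ℕ) ⊆ G := Finset.singleton_subset_iff.2 ha
    have sbG : ({b} : Finset ℕ) ⊆ G := Finset.singleton_subset_iff.2 hb
    have scG : ¬ ({c} : Finset ℕ) ⊆ G := by simpa using hc
    have saca : ({a} : Finset ℕ) ⊆ {c, a} := by simp
    have sccb : ({c} : Finset ℕ) ⊆ {c, b} := by simp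
    have scca : ({c} : Finset ℕ) ⊆ {c, a} := by simp
    have sbcb : ({b} : Finset ℕ) ⊆ {c, b} := by simp
    have sacb : ¬ ({a} : Finset ℕ) ⊆ {c, b} := by simp [hca.symm, hab]
    have sbca : ¬ ({b} : Finset ℕ) ⊆ {c, a} := by simp [hcb.symm, hab.symm]
    have scaG : ¬ ({c, a} : Finset ℕ) ⊆ G := fun h => hc (h (by simp))
    have scbG : ¬ ({c, b} : Finset ℕ) ⊆ G := fun h => hc (h (by simp))
    have sGca : ¬ G ⊆ ({c, a} : Finset ℕ) := fun h => by
      rcases Finset.mem_insert.1 (h hb) with h' | h'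
      · exact hcb h'.symm
      · exact hab (Finset.mem_singleton.1 h').symm
    have sGcb : ¬ G ⊆ ({c, b} : Finset ℕ) := fun h => by
      rcases Finset.mem_insert.1 (h ha) with h' | h'
      · exact hca h'.symm
      · exact hab (Finset.mem_singleton.1 h')
    have scacb : ¬ ({c, a} : Finset ℕ) ⊆ {c, b} := fun h => by
      rcases Finset.mem_insert.1 (h (by simp : a ∈ ({c,a}:Finset ℕ))) with h' | h'
      · exact hca h'.symm
      · exact hab (Finset.mem_singleton.1 h')
    have scbca : ¬ ({c, b} : Finset ℕ) ⊆ {c, a} := fun h => by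
      rcases Finset.mem_insert.1 (h (by simp : b ∈ ({c,b}:Finset ℕ))) with h' | h'
      · exact hcb h'.symm
      · exact hab (Finset.mem_singleton.1 h').symm
    have scaI : ({c, a} : Finset ℕ) ⊆ Finset.Icc 1 n := by
      intro x hx; rcases Finset.mem_insert.1 hx with rfl | hx
      · exact hcI
      · exact Finset.mem_singleton.1 hx ▸ haI
    have scbI : ({c, b} : Finset ℕ) ⊆ Finset.Icc 1 n := by
      intro x hx; rcases Finset.mem_insert.1 hx with rfl | hx
      · exact hcI
      · exact Finset.mem_singleton.1 hx ▸ hbI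
    have saI2 : ({a} : Finset ℕ) ⊆ Finset.Icc 1 n := Finset.singleton_subset_iff.2 haI
    have sbI2 : ({b} : Finset ℕ) ⊆ Finset.Icc 1 n := Finset.singleton_subset_iff.2 hbI
    have scI2 : ({c} : Finset ℕ) ⊆ Finset.Icc 1 n := Finset.singleton_subset_iff.2 hcI
    have sIG : ¬ Finset.Icc 1 n ⊆ G := fun h => hc (h hcI)
    have sIca : ¬ Finset.Icc 1 n ⊆ ({c, a} : Finset ℕ) := fun h => by
      rcases Finset.mem_insert.1 (h hbI) with h' | h'
      · exact hcb h'.symm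
      · exact hab (Finset.mem_singleton.1 h').symm
    have sIcb : ¬ Finset.Icc 1 n ⊆ ({c, b} : Finset ℕ) := fun h => by
      rcases Finset.mem_insert.1 (h haI) with h' | h'
      · exact hca h'.symm
      · exact hab (Finset.mem_singleton.1 h')
    have sIa : ¬ Finset.Icc 1 n ⊆ ({a} : Finset ℕ) := fun h => hab (by
      have := Finset.mem_singleton.1 (h hbI); omega)
    have sIb : ¬ Finset.Icc 1 n ⊆ ({b} : Finset ℕ) := fun h => hab (by
      have := Finset.mem_singleton.1 (h haI); omega)
    have sIc : ¬ Finset.Icc 1 n ⊆ ({c} : Finset ℕ) := fun h => hca (by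
      have := Finset.mem_singleton.1 (h haI); omega)
    have sGa : ¬ G ⊆ ({a} : Finset ℕ) := fun h => hab (Finset.mem_singleton.1 (h hb)).symm
    have sGb : ¬ G ⊆ ({b} : Finset ℕ) := fun h => hab (Finset.mem_singleton.1 (h ha))
    have sGc : ¬ G ⊆ ({c} : Finset ℕ) := fun h => hca (Finset.mem_singleton.1 (h ha)).symm
    have sGI : G ⊆ Finset.Icc 1 n := hG
    have sGe : ¬ G ⊆ (∅ : Finset ℕ) := fun h => (Finset.notMem_empty a) (h ha)
    have scae : ¬ ({c, a} : Finset ℕ) ⊆ ∅ := fun h => (Finset.notMem_empty c) (h (by simp))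
    have scbe : ¬ ({c, b} : Finset ℕ) ⊆ ∅ := fun h => (Finset.notMem_empty c) (h (by simp))
    have sIe : ¬ Finset.Icc 1 n ⊆ ∅ := fun h => (Finset.notMem_empty a) (h haI)
    have sae : ¬ ({a} : Finset ℕ) ⊆ ∅ := by simp
    have sbe : ¬ ({b} : Finset ℕ) ⊆ ∅ := by simp
    have sce : ¬ ({c} : Finset ℕ) ⊆ ∅ := by simp
    have scaa : ¬ ({c, a} : Finset ℕ) ⊆ {a} := fun h => hca (Finset.mem_singleton.1 (h (by simp)))
    have scbb : ¬ ({c, b} : Finset ℕ) ⊆ {b} := fun h => hcb (Finset.mem_singleton.1 (h (by simp)))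
    have scac : ¬ ({c, a} : Finset ℕ) ⊆ {c} := fun h => hca (Finset.mem_singleton.1 (h (by simp))).symm
    have scbc : ¬ ({c, b} : Finset ℕ) ⊆ {c} := fun h => hcb (Finset.mem_singleton.1 (h (by simp))).symm
    have scab : ¬ ({c, a} : Finset ℕ) ⊆ {b} := fun h => hcb (Finset.mem_singleton.1 (h (by simp)))
    have scba : ¬ ({c, b} : Finset ℕ) ⊆ {a} := fun h => hca (Finset.mem_singleton.1 (h (by simp)))
    by_cases h0 : (0:Fin 3) ∈ s <;> by_cases h1 : (1:Fin 3) ∈ s <;>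
      by_cases h2 : (2:Fin 3) ∈ s <;>
      by_cases k0 : (0:Fin 3) ∈ t <;> by_cases k1 : (1:Fin 3) ∈ t <;>
      by_cases k2 : (2:Fin 3) ∈ t <;>
      simp only [h0, h1, h2, k0, k1, k2, if_true, if_false, true_implies, false_implies,
        imp_false, and_true, true_and, and_false, false_and, iff_true, iff_false,
        not_true, not_false_iff, not_not, false_iff, true_iff] <;>
      first
        | assumption
        | exact Finset.Subset.refl _
        | exact Finset.empty_subset _

lemma famB3_case (n : ℕ) (hn : 4 ≤ n) (G : Finset ℕ)
    (hG : G ⊆ Finset.Icc 1 n) (hGF : G ∉ famB3 n)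
    (h12 : ¬(1 ∈ G ∧ 2 ∈ G))
    (h2 : ¬ ∃ a ∈ G, ∃ b ∈ G, a ≠ b ∧ 3 ≤ a ∧ 3 ≤ b) : False := by
  push_neg at h2
  -- choose c ∈ {1,2} \ G, o the other
  obtain ⟨c, o, hco, hcG⟩ : ∃ c o : ℕ, (c = 1 ∧ o = 2 ∨ c = 2 ∧ o = 1) ∧ c ∉ G := by
    by_cases h1 : 1 ∈ G
    · exact ⟨2, 1, Or.inr ⟨rfl, rfl⟩, fun h => h12 ⟨h1, h⟩⟩
    · exact ⟨1, 2, Or.inl ⟨rfl, rfl⟩, h1⟩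
  have hoI : o ∈ Finset.Icc 1 n := by
    simp only [Finset.mem_Icc]; rcases hco with ⟨_, rfl⟩ | ⟨_, rfl⟩ <;> omega
  have key : ∀ x ∈ G, x = o ∨ 3 ≤ x := by
    intro x hx
    have hx' := Finset.mem_Icc.1 (hG hx)
    have hxc : x ≠ c := fun h => hcG (h ▸ hx)
    rcases hco with ⟨rfl, rfl⟩ | ⟨rfl, rfl⟩ <;> omega
  rcases (G.filter (fun x => 3 ≤ x)).eq_empty_or_nonempty with hT | ⟨v, hv⟩
  · -- G ⊆ {o}
    have hsub : G ⊆ {o} := by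
      intro x hx
      rcases key x hx with rfl | h3
      · simp
      · exact absurd (Finset.mem_filter.2 ⟨hx, h3⟩) (by simp [hT])
    rcases Finset.subset_singleton_iff.1 hsub with rfl | rfl
    · exact hGF (mem_fam_empty n)
    · exact hGF (mem_fam_single n o hoI)
  · have hvG : v ∈ G := (Finset.mem_filter.1 hv).1
    have hv3 : 3 ≤ v := (Finset.mem_filter.1 hv).2
    have hvI : v ∈ Finset.Icc 3 n := Finset.mem_Icc.2 ⟨hv3, (Finset.mem_Icc.1 (hG hvG)).2⟩
    have hsub : G ⊆ {o, v} := by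
      intro x hx
      rcases key x hx with rfl | h3
      · simp
      · have hxv : x = v := by
          by_contra hne
          have := h2 x hx v hvG hne h3
          omega
        simp [hxv]
    have ho12 : o = 1 ∨ o = 2 := by rcases hco with ⟨_, rfl⟩ | ⟨_, rfl⟩ <;> simp
    rcases fsub_pair hsub with rfl | rfl | rfl | rfl
    · exact hGF (mem_fam_empty n)
    · exact hGF (mem_fam_single n o hoI)
    · exact hGF (mem_fam_single n v (Finset.mem_Icc.2 ⟨by omega, (Finset.mem_Icc.1 hvI).2⟩))
    · exact hGF (mem_fam_pair n o v ho12 hvI)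


/-- Adding any set outside the family creates an induced copy of `B_3`. -/
theorem famB3_saturated (n : ℕ) (hn : 4 ≤ n) (G : Finset ℕ)
    (hG : G ⊆ Finset.Icc 1 n) (hGF : G ∉ famB3 n) :
    HasB3 (famB3 n ∪ {G}) := by
  by_cases h12 : 1 ∈ G ∧ 2 ∈ G
  · have hne : G ≠ Finset.Icc 1 n := fun h => hGF (h ▸ Or.inl (Or.inl (Or.inr rfl)))
    obtain ⟨c, hcI, hcG⟩ : ∃ c ∈ Finset.Icc 1 n, c ∉ G := by
      by_contra h
      push_neg at h
      exact hne (Finset.Subset.antisymm hG h)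
    have hc3 : c ∈ Finset.Icc 3 n := by
      have h' := Finset.mem_Icc.1 hcI
      have hc1 : c ≠ 1 := fun e => hcG (e ▸ h12.1)
      have hc2 : c ≠ 2 := fun e => hcG (e ▸ h12.2)
      simp only [Finset.mem_Icc]
      omega
    exact key n G hG 1 2 c h12.1 h12.2 hcG (by omega) hcI
      (mem_fam_pair' n 1 c (Or.inl rfl) hc3) (mem_fam_pair' n 2 c (Or.inr rfl) hc3)
  · by_cases h2 : ∃ a ∈ G, ∃ b ∈ G, a ≠ b ∧ 3 ≤ a ∧ 3 ≤ b
    · obtain ⟨a, ha, b, hb, hab, ha3, hb3⟩ := h2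
      obtain ⟨c, hc12, hcG⟩ : ∃ c : ℕ, (c = 1 ∨ c = 2) ∧ c ∉ G := by
        by_cases h1 : 1 ∈ G
        · exact ⟨2, Or.inr rfl, fun h => h12 ⟨h1, h⟩⟩
        · exact ⟨1, Or.inl rfl, h1⟩
      have hcI : c ∈ Finset.Icc 1 n := by
        simp only [Finset.mem_Icc]; rcases hc12 with rfl | rfl <;> omega
      have haI : a ∈ Finset.Icc 3 n :=
        Finset.mem_Icc.2 ⟨ha3, (Finset.mem_Icc.1 (hG ha)).2⟩
      have hbI : b ∈ Finset.Icc 3 n :=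
        Finset.mem_Icc.2 ⟨hb3, (Finset.mem_Icc.1 (hG hb)).2⟩
      exact key n G hG a b c ha hb hcG hab hcI
        (mem_fam_pair n c a hc12 haI) (mem_fam_pair n c b hc12 hbI)
    · exact absurd (famB3_case n hn G hG hGF h12 h2) (fun h => h)
end

section
/- For n ≥ 4, the induced saturation number of the Boolean lattice B_3 satisfies sat*(n, B_3) ≤ 3n − 2. -/
def Fam (n : ℕ) : Finset (Finset ℕ) :=
  (({∅, Finset.Icc 1 n} : Finset (Finset ℕ)) ∪ (Finset.Icc 1 n).image (fun i => {i})
    ∪ (Finset.Icc 3 n).image (fun v => ({1, v} : Finset ℕ)))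
    ∪ (Finset.Icc 3 n).image (fun v => ({2, v} : Finset ℕ))

lemma mem_Fam {n : ℕ} {A : Finset ℕ} :
    A ∈ Fam n ↔ A = ∅ ∨ A = Finset.Icc 1 n ∨ (∃ i, 1 ≤ i ∧ i ≤ n ∧ A = {i}) ∨
      (∃ v, 3 ≤ v ∧ v ≤ n ∧ A = ({1, v} : Finset ℕ)) ∨
      (∃ v, 3 ≤ v ∧ v ≤ n ∧ A = ({2, v} : Finset ℕ)) := by
  simp only [Fam, Finset.mem_union, Finset.mem_insert, Finset.mem_singleton,
    Finset.mem_image, Finset.mem_Icc]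
  constructor
  · rintro ((((h | h) | ⟨i, ⟨hi1, hi2⟩, rfl⟩) | ⟨v, ⟨hv1, hv2⟩, rfl⟩) | ⟨v, ⟨hv1, hv2⟩, rfl⟩)
    · exact Or.inl h
    · exact Or.inr (Or.inl h)
    · exact Or.inr (Or.inr (Or.inl ⟨i, hi1, hi2, rfl⟩))
    · exact Or.inr (Or.inr (Or.inr (Or.inl ⟨v, hv1, hv2, rfl⟩)))
    · exact Or.inr (Or.inr (Or.inr (Or.inr ⟨v, hv1, hv2, rfl⟩)))
  · rintro (rfl | rfl | ⟨i, h1, h2, rfl⟩ | ⟨v, h1, h2, rfl⟩ | ⟨v, h1, h2, rfl⟩)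
    · exact Or.inl (Or.inl (Or.inl (Or.inl rfl)))
    · exact Or.inl (Or.inl (Or.inl (Or.inr rfl)))
    · exact Or.inl (Or.inl (Or.inr ⟨i, ⟨h1, h2⟩, rfl⟩))
    · exact Or.inl (Or.inr ⟨v, ⟨h1, h2⟩, rfl⟩)
    · exact Or.inr ⟨v, ⟨h1, h2⟩, rfl⟩

lemma Fam_subset {n : ℕ} (hn : 4 ≤ n) {A : Finset ℕ} (hA : A ∈ Fam n) :
    A ⊆ Finset.Icc 1 n := by
  rcases mem_Fam.1 hA with rfl | rfl | ⟨i, h1, h2, rfl⟩ | ⟨v, h1, h2, rfl⟩ | ⟨v, h1, h2, rfl⟩ <;>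
    intro x hx <;> simp_all [Finset.mem_Icc] <;> omega

lemma Fam_card {n : ℕ} (hn : 4 ≤ n) : (Fam n).card ≤ 3 * n - 2 := by
  have h1 := Finset.card_union_le
    ((({∅, Finset.Icc 1 n} : Finset (Finset ℕ)) ∪ (Finset.Icc 1 n).image (fun i => ({i} : Finset ℕ))
      ∪ (Finset.Icc 3 n).image (fun v => ({1, v} : Finset ℕ))))
    ((Finset.Icc 3 n).image (fun v => ({2, v} : Finset ℕ)))
  have h2 := Finset.card_union_le
    ((({∅, Finset.Icc 1 n} : Finset (Finset ℕ)) ∪ (Finset.Icc 1 n).image (fun i => ({i} : Finset ℕ))))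
    ((Finset.Icc 3 n).image (fun v => ({1, v} : Finset ℕ)))
  have h3 := Finset.card_union_le (({∅, Finset.Icc 1 n} : Finset (Finset ℕ)))
    ((Finset.Icc 1 n).image (fun i => ({i} : Finset ℕ)))
  have h4 : (({∅, Finset.Icc 1 n} : Finset (Finset ℕ))).card ≤ 2 := Finset.card_insert_le _ _
  have h5 : ((Finset.Icc 1 n).image (fun i => ({i} : Finset ℕ))).card ≤ n := by
    calc _ ≤ (Finset.Icc 1 n).card := Finset.card_image_le
    _ = n := by rw [Nat.card_Icc]; omega
  have h6 : ((Finset.Icc 3 n).image (fun v => ({1, v} : Finset ℕ))).card ≤ n - 2 := by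
    calc _ ≤ (Finset.Icc 3 n).card := Finset.card_image_le
    _ = n - 2 := by rw [Nat.card_Icc]; omega
  have h7 : ((Finset.Icc 3 n).image (fun v => ({2, v} : Finset ℕ))).card ≤ n - 2 := by
    calc _ ≤ (Finset.Icc 3 n).card := Finset.card_image_le
    _ = n - 2 := by rw [Nat.card_Icc]; omega
  rw [Fam]
  omega

lemma subset_iff_fin3 (s t : Finset (Fin 3)) :
    s ⊆ t ↔ (((0:Fin 3) ∈ s → (0:Fin 3) ∈ t) ∧ ((1:Fin 3) ∈ s → (1:Fin 3) ∈ t) ∧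
      ((2:Fin 3) ∈ s → (2:Fin 3) ∈ t)) := by
  constructor
  · intro h; exact ⟨fun h' => h h', fun h' => h h', fun h' => h h'⟩
  · rintro ⟨h0, h1, h2⟩ a ha
    fin_cases a
    · exact h0 ha
    · exact h1 ha
    · exact h2 ha

lemma hasB3_of (𝒢 : Set (Finset ℕ)) (y0 y1 y2 : ℕ) (C01 C02 C12 T : Finset ℕ)
    (hy01 : y0 ≠ y1) (hy02 : y0 ≠ y2) (hy12 : y1 ≠ y2)
    (h0T : y0 ∈ T) (h1T : y1 ∈ T) (h2T : y2 ∈ T)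
    (h001 : y0 ∈ C01) (h002 : y0 ∈ C02) (h012 : y0 ∉ C12)
    (h101 : y1 ∈ C01) (h112 : y1 ∈ C12) (h102 : y1 ∉ C02)
    (h202 : y2 ∈ C02) (h212 : y2 ∈ C12) (h201 : y2 ∉ C01)
    (hC01T : C01 ⊆ T) (hC02T : C02 ⊆ T) (hC12T : C12 ⊆ T)
    (mB : ∅ ∈ 𝒢) (mT : T ∈ 𝒢) (m0 : ({y0} : Finset ℕ) ∈ 𝒢) (m1 : ({y1} : Finset ℕ) ∈ 𝒢)
    (m2 : ({y2} : Finset ℕ) ∈ 𝒢)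
    (mc01 : C01 ∈ 𝒢) (mc02 : C02 ∈ 𝒢) (mc12 : C12 ∈ 𝒢) : HasB3 𝒢 := by
  classical
  have hy10 : y1 ≠ y0 := hy01.symm
  have hy20 : y2 ≠ y0 := hy02.symm
  have hy21 : y2 ≠ y1 := hy12.symm
  have n1 : ¬ C01 ⊆ C02 := fun h => h102 (h h101)
  have n2 : ¬ C01 ⊆ C12 := fun h => h012 (h h001)
  have n3 : ¬ C02 ⊆ C01 := fun h => h201 (h h202)
  have n4 : ¬ C02 ⊆ C12 := fun h => h012 (h h002)
  have n5 : ¬ C12 ⊆ C01 := fun h => h201 (h h212)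
  have n6 : ¬ C12 ⊆ C02 := fun h => h102 (h h112)
  have n7 : ¬ T ⊆ C01 := fun h => h201 (h h2T)
  have n8 : ¬ T ⊆ C02 := fun h => h102 (h h1T)
  have n9 : ¬ T ⊆ C12 := fun h => h012 (h h0T)
  have n10 : ¬ C01 ⊆ {y0} := fun h => hy10 (Finset.mem_singleton.1 (h h101))
  have n11 : ¬ C01 ⊆ {y1} := fun h => hy01 (Finset.mem_singleton.1 (h h001))
  have n12 : ¬ C01 ⊆ {y2} := fun h => hy02 (Finset.mem_singleton.1 (h h001))
  have n13 : ¬ C02 ⊆ {y0} := fun h => hy20 (Finset.mem_singleton.1 (h h202))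
  have n14 : ¬ C02 ⊆ {y1} := fun h => hy01 (Finset.mem_singleton.1 (h h002))
  have n15 : ¬ C02 ⊆ {y2} := fun h => hy02 (Finset.mem_singleton.1 (h h002))
  have n16 : ¬ C12 ⊆ {y0} := fun h => hy10 (Finset.mem_singleton.1 (h h112))
  have n17 : ¬ C12 ⊆ {y1} := fun h => hy21 (Finset.mem_singleton.1 (h h212))
  have n18 : ¬ C12 ⊆ {y2} := fun h => hy12 (Finset.mem_singleton.1 (h h112))
  have n19 : ¬ T ⊆ {y0} := fun h => hy10 (Finset.mem_singleton.1 (h h1T))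
  have n20 : ¬ T ⊆ {y1} := fun h => hy01 (Finset.mem_singleton.1 (h h0T))
  have n21 : ¬ T ⊆ {y2} := fun h => hy02 (Finset.mem_singleton.1 (h h0T))
  have e1 : C01 ≠ ∅ := Finset.ne_empty_of_mem h001
  have e2 : C02 ≠ ∅ := Finset.ne_empty_of_mem h002
  have e3 : C12 ≠ ∅ := Finset.ne_empty_of_mem h112
  have e4 : T ≠ ∅ := Finset.ne_empty_of_mem h0T
  refine ⟨fun s =>
    if (0:Fin 3) ∈ s then
      if (1:Fin 3) ∈ s then (if (2:Fin 3) ∈ s then T else C01)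
      else (if (2:Fin 3) ∈ s then C02 else {y0})
    else
      if (1:Fin 3) ∈ s then (if (2:Fin 3) ∈ s then C12 else {y1})
      else (if (2:Fin 3) ∈ s then {y2} else ∅), ?_, ?_⟩
  · intro s
    by_cases h0 : (0:Fin 3) ∈ s <;> by_cases h1 : (1:Fin 3) ∈ s <;>
      by_cases h2 : (2:Fin 3) ∈ s <;> simp only [h0, h1, h2, if_true, if_false] <;>
      assumption
  · intro s t
    rw [subset_iff_fin3]
    by_cases h0 : (0:Fin 3) ∈ s <;> by_cases h1 : (1:Fin 3) ∈ s <;>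
      by_cases h2 : (2:Fin 3) ∈ s <;> by_cases g0 : (0:Fin 3) ∈ t <;>
      by_cases g1 : (1:Fin 3) ∈ t <;> by_cases g2 : (2:Fin 3) ∈ t <;>
      simp_all

lemma subset_pair {A : Finset ℕ} {u v : ℕ} (h : A ⊆ {u, v}) :
    A = ∅ ∨ A = {u} ∨ A = {v} ∨ A = {u, v} := by
  by_cases hu : u ∈ A
  · rcases Finset.subset_singleton_iff.1 (Finset.subset_insert_iff.1 h) with h' | h'
    · right; left
      rw [← Finset.insert_erase hu, h']; rfl
    · right; right; right
      rw [← Finset.insert_erase hu, h']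
  · rw [Finset.subset_insert_iff, Finset.erase_eq_of_notMem hu] at h
    rcases Finset.subset_singleton_iff.1 h with h' | h'
    · exact Or.inl h'
    · exact Or.inr (Or.inr (Or.inl h'))

lemma pairs_case {A B : Finset ℕ} {u v : ℕ} (hA : A ⊆ {u, v}) (hB : B ⊆ {u, v})
    (hAB : ¬ A ⊆ B) (hBA : ¬ B ⊆ A) :
    (A = {u} ∧ B = {v}) ∨ (A = {v} ∧ B = {u}) := by
  rcases subset_pair hA with rfl | rfl | rfl | rfl
  · exact absurd (Finset.empty_subset B) hAB
  · rcases subset_pair hB with rfl | rfl | rfl | rfl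
    · exact absurd (Finset.empty_subset _) hBA
    · exact absurd Finset.Subset.rfl hAB
    · exact Or.inl ⟨rfl, rfl⟩
    · exact absurd (by intro x hx; simp_all) hAB
  · rcases subset_pair hB with rfl | rfl | rfl | rfl
    · exact absurd (Finset.empty_subset _) hBA
    · exact Or.inr ⟨rfl, rfl⟩
    · exact absurd Finset.Subset.rfl hAB
    · exact absurd (by intro x hx; simp_all) hAB
  · exact absurd hB hBA

lemma coatom_struct {n : ℕ} {P A B C' : Finset ℕ} (hP : P ∈ Fam n)
    (hC : C' ⊆ Finset.Icc 1 n)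
    (hA : A ⊆ P) (hB : B ⊆ P) (hAB : ¬ A ⊆ B) (hBA : ¬ B ⊆ A) (hCP : ¬ C' ⊆ P) :
    ∃ x y, x ≤ 2 ∧ 3 ≤ y ∧ ((A = {x} ∧ B = {y}) ∨ (A = {y} ∧ B = {x})) := by
  rcases mem_Fam.1 hP with rfl | rfl | ⟨i, h1, h2, rfl⟩ | ⟨v, h1, h2, rfl⟩ | ⟨v, h1, h2, rfl⟩
  · rw [Finset.subset_empty] at hA
    exact absurd (hA ▸ Finset.empty_subset B) hAB
  · exact absurd hC hCP
  · rcases Finset.subset_singleton_iff.1 hA with rfl | rfl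
    · exact absurd (Finset.empty_subset B) hAB
    · rcases Finset.subset_singleton_iff.1 hB with rfl | rfl
      · exact absurd (Finset.empty_subset _) hBA
      · exact absurd Finset.Subset.rfl hAB
  · exact ⟨1, v, by norm_num, h1, pairs_case hA hB hAB hBA⟩
  · exact ⟨2, v, by norm_num, h1, pairs_case hA hB hAB hBA⟩

lemma noB3 {n : ℕ} (hn : 4 ≤ n) : ¬ HasB3 (↑(Fam n)) := by
  rintro ⟨f, hmem, hord⟩
  have key : ∀ s t : Finset (Fin 3), ¬ s ⊆ t → ¬ f s ⊆ f t :=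
    fun s t h h' => h ((hord s t).2 h')
  have h01 := coatom_struct (hmem {0, 1}) (Fam_subset hn (hmem {2}))
    ((hord {0} {0, 1}).1 (by decide)) ((hord {1} {0, 1}).1 (by decide))
    (key {0} {1} (by decide)) (key {1} {0} (by decide)) (key {2} {0, 1} (by decide))
  have h02 := coatom_struct (hmem {0, 2}) (Fam_subset hn (hmem {1}))
    ((hord {0} {0, 2}).1 (by decide)) ((hord {2} {0, 2}).1 (by decide))
    (key {0} {2} (by decide)) (key {2} {0} (by decide)) (key {1} {0, 2} (by decide))
  have h12 := coatom_struct (hmem {1, 2}) (Fam_subset hn (hmem {0}))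
    ((hord {1} {1, 2}).1 (by decide)) ((hord {2} {1, 2}).1 (by decide))
    (key {1} {2} (by decide)) (key {2} {1} (by decide)) (key {0} {1, 2} (by decide))
  obtain ⟨x0, x1, hfx0, hfx1, hd1⟩ : ∃ x0 x1, f {0} = {x0} ∧ f {1} = {x1} ∧
      ((x0 ≤ 2 ∧ 3 ≤ x1) ∨ (3 ≤ x0 ∧ x1 ≤ 2)) := by
    obtain ⟨u, v, hu, hv, (⟨hA, hB⟩ | ⟨hA, hB⟩)⟩ := h01
    · exact ⟨u, v, hA, hB, Or.inl ⟨hu, hv⟩⟩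
    · exact ⟨v, u, hA, hB, Or.inr ⟨hv, hu⟩⟩
  obtain ⟨x0', x2, hfx0', hfx2, hd2⟩ : ∃ x0' x2, f {0} = {x0'} ∧ f {2} = {x2} ∧
      ((x0' ≤ 2 ∧ 3 ≤ x2) ∨ (3 ≤ x0' ∧ x2 ≤ 2)) := by
    obtain ⟨u, v, hu, hv, (⟨hA, hB⟩ | ⟨hA, hB⟩)⟩ := h02
    · exact ⟨u, v, hA, hB, Or.inl ⟨hu, hv⟩⟩
    · exact ⟨v, u, hA, hB, Or.inr ⟨hv, hu⟩⟩
  obtain ⟨x1', x2', hfx1', hfx2', hd3⟩ : ∃ x1' x2', f {1} = {x1'} ∧ f {2} = {x2'} ∧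
      ((x1' ≤ 2 ∧ 3 ≤ x2') ∨ (3 ≤ x1' ∧ x2' ≤ 2)) := by
    obtain ⟨u, v, hu, hv, (⟨hA, hB⟩ | ⟨hA, hB⟩)⟩ := h12
    · exact ⟨u, v, hA, hB, Or.inl ⟨hu, hv⟩⟩
    · exact ⟨v, u, hA, hB, Or.inr ⟨hv, hu⟩⟩
  have e0 : x0 = x0' := Finset.singleton_injective (hfx0.symm.trans hfx0')
  have e1 : x1 = x1' := Finset.singleton_injective (hfx1.symm.trans hfx1')
  have e2 : x2 = x2' := Finset.singleton_injective (hfx2.symm.trans hfx2')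
  omega

lemma saturated {n : ℕ} (hn : 4 ≤ n) {G : Finset ℕ} (hG : G ⊆ Finset.Icc 1 n)
    (hGF : G ∉ Fam n) : HasB3 ((↑(Fam n) : Set (Finset ℕ)) ∪ {G}) := by
  set 𝒢 : Set (Finset ℕ) := (↑(Fam n) : Set (Finset ℕ)) ∪ {G} with h𝒢
  have mF : ∀ {A : Finset ℕ}, A ∈ Fam n → A ∈ 𝒢 := fun h => Set.mem_union_left _ h
  have mG : G ∈ 𝒢 := Set.mem_union_right _ rfl
  have memE : (∅ : Finset ℕ) ∈ Fam n := mem_Fam.2 (Or.inl rfl)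
  have memT : Finset.Icc 1 n ∈ Fam n := mem_Fam.2 (Or.inr (Or.inl rfl))
  have memS : ∀ i, 1 ≤ i → i ≤ n → ({i} : Finset ℕ) ∈ Fam n := fun i h1 h2 =>
    mem_Fam.2 (Or.inr (Or.inr (Or.inl ⟨i, h1, h2, rfl⟩)))
  have memP1 : ∀ v, 3 ≤ v → v ≤ n → ({1, v} : Finset ℕ) ∈ Fam n := fun v h1 h2 =>
    mem_Fam.2 (Or.inr (Or.inr (Or.inr (Or.inl ⟨v, h1, h2, rfl⟩))))
  have memP2 : ∀ v, 3 ≤ v → v ≤ n → ({2, v} : Finset ℕ) ∈ Fam n := fun v h1 h2 =>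
    mem_Fam.2 (Or.inr (Or.inr (Or.inr (Or.inr ⟨v, h1, h2, rfl⟩))))
  have hGm : ∀ x ∈ G, 1 ≤ x ∧ x ≤ n := fun x hx => Finset.mem_Icc.1 (hG hx)
  have hIcc : ∀ x, 1 ≤ x → x ≤ n → x ∈ Finset.Icc 1 n := fun x h1 h2 => Finset.mem_Icc.2 ⟨h1, h2⟩
  by_cases h1G : 1 ∈ G
  · by_cases h2G : 2 ∈ G
    · -- 1,2 ∈ G : pick x ∉ G
      have hGne : G ≠ Finset.Icc 1 n := fun h => hGF (mem_Fam.2 (Or.inr (Or.inl h)))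
      obtain ⟨x, hxI, hxG⟩ := Finset.exists_of_ssubset (lt_of_le_of_ne hG hGne)
      obtain ⟨hx1, hxn⟩ := Finset.mem_Icc.1 hxI
      have hx3 : 3 ≤ x := by
        rcases Nat.lt_or_ge x 3 with h | h
        · interval_cases x <;> simp_all
        · exact h
      refine hasB3_of 𝒢 1 2 x G {1, x} {2, x} (Finset.Icc 1 n) (by norm_num)
        (by omega) (by omega) (hIcc 1 (by omega) (by omega)) (hIcc 2 (by omega) (by omega))
        hxI h1G (by simp) (by simp; omega) h2G (by simp) (by simp; omega)
        (by simp) (by simp) hxG hG ?_ ?_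
        (mF memE) (mF memT) (mF (memS 1 (by omega) (by omega)))
        (mF (memS 2 (by omega) (by omega))) (mF (memS x (by omega) hxn))
        mG (mF (memP1 x hx3 hxn)) (mF (memP2 x hx3 hxn))
      · intro y hy; simp at hy; rcases hy with rfl | rfl
        · exact hIcc 1 (by omega) (by omega)
        · exact hxI
      · intro y hy; simp at hy; rcases hy with rfl | rfl
        · exact hIcc 2 (by omega) (by omega)
        · exact hxI
    · -- 1 ∈ G, 2 ∉ G : two elements ≥ 3 in G
      obtain ⟨v, hvG, w, hwG, hvw, hv3, hw3⟩ :
          ∃ v ∈ G, ∃ w ∈ G, v ≠ w ∧ 3 ≤ v ∧ 3 ≤ w := by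
        set E := G.erase 1 with hE
        have hEb : ∀ x ∈ E, 3 ≤ x := by
          intro x hx
          have h1 := Finset.ne_of_mem_erase hx
          have h2 := Finset.mem_of_mem_erase hx
          have := hGm x h2
          have : x ≠ 2 := fun h => h2G (h ▸ h2)
          omega
        rcases Nat.lt_or_ge 1 E.card with h | h
        · obtain ⟨a, ha, b, hb, hab⟩ := Finset.one_lt_card.1 h
          exact ⟨a, Finset.mem_of_mem_erase ha, b, Finset.mem_of_mem_erase hb, hab,
            hEb a ha, hEb b hb⟩
        · exfalso
          rcases Nat.le_one_iff_eq_zero_or_eq_one.1 h with h0 | h1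
          · rcases (Finset.erase_eq_empty_iff G 1).1 (Finset.card_eq_zero.1 h0) with rfl | rfl
            · exact hGF memE
            · exact hGF (memS 1 (by omega) (by omega))
          · obtain ⟨v, hv⟩ := Finset.card_eq_one.1 h1
            have hv3 : 3 ≤ v := hEb v (hv ▸ Finset.mem_singleton_self v)
            have hvn : v ≤ n := (hGm v (Finset.mem_of_mem_erase (hv ▸ Finset.mem_singleton_self v))).2
            have : G = {1, v} := by rw [← Finset.insert_erase h1G, ← hE, hv]
            exact hGF (this ▸ memP1 v hv3 hvn)
      have hvn := (hGm v hvG).2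
      have hwn := (hGm w hwG).2
      refine hasB3_of 𝒢 v w 2 G {2, v} {2, w} (Finset.Icc 1 n) hvw (by omega) (by omega)
        (hIcc v (by omega) hvn) (hIcc w (by omega) hwn) (hIcc 2 (by omega) (by omega))
        hvG (by simp) (by simp; omega) hwG (by simp) (by simp; omega)
        (by simp) (by simp) h2G hG ?_ ?_
        (mF memE) (mF memT) (mF (memS v (by omega) hvn)) (mF (memS w (by omega) hwn))
        (mF (memS 2 (by omega) (by omega)))
        mG (mF (memP2 v hv3 hvn)) (mF (memP2 w hw3 hwn))
      · intro y hy; simp at hy; rcases hy with rfl | rfl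
        · exact hIcc 2 (by omega) (by omega)
        · exact hIcc _ (by omega) (by omega)
      · intro y hy; simp at hy; rcases hy with rfl | rfl
        · exact hIcc 2 (by omega) (by omega)
        · exact hIcc _ (by omega) (by omega)
  · -- 1 ∉ G
    obtain ⟨v, hvG, w, hwG, hvw, hv3, hw3⟩ :
        ∃ v ∈ G, ∃ w ∈ G, v ≠ w ∧ 3 ≤ v ∧ 3 ≤ w := by
      set E := G.erase 2 with hE
      have hEb : ∀ x ∈ E, 3 ≤ x := by
        intro x hx
        have h1 := Finset.ne_of_mem_erase hx
        have h2 := Finset.mem_of_mem_erase hx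
        have := hGm x h2
        have : x ≠ 1 := fun h => h1G (h ▸ h2)
        omega
      rcases Nat.lt_or_ge 1 E.card with h | h
      · obtain ⟨a, ha, b, hb, hab⟩ := Finset.one_lt_card.1 h
        exact ⟨a, Finset.mem_of_mem_erase ha, b, Finset.mem_of_mem_erase hb, hab,
          hEb a ha, hEb b hb⟩
      · exfalso
        rcases Nat.le_one_iff_eq_zero_or_eq_one.1 h with h0 | h1
        · rcases (Finset.erase_eq_empty_iff G 2).1 (Finset.card_eq_zero.1 h0) with rfl | rfl
          · exact hGF memE
          · exact hGF (memS 2 (by omega) (by omega))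
        · obtain ⟨v, hv⟩ := Finset.card_eq_one.1 h1
          have hv3 : 3 ≤ v := hEb v (hv ▸ Finset.mem_singleton_self v)
          have hvG : v ∈ G := Finset.mem_of_mem_erase (hv ▸ Finset.mem_singleton_self v)
          have hvn : v ≤ n := (hGm v hvG).2
          by_cases h2G : 2 ∈ G
          · have : G = {2, v} := by rw [← Finset.insert_erase h2G, ← hE, hv]
            exact hGF (this ▸ memP2 v hv3 hvn)
          · have : G = {v} := by rw [← Finset.erase_eq_of_notMem h2G, ← hE, hv]
            exact hGF (this ▸ memS v (by omega) hvn)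
    have hvn := (hGm v hvG).2
    have hwn := (hGm w hwG).2
    refine hasB3_of 𝒢 v w 1 G {1, v} {1, w} (Finset.Icc 1 n) hvw (by omega) (by omega)
      (hIcc v (by omega) hvn) (hIcc w (by omega) hwn) (hIcc 1 (by omega) (by omega))
      hvG (by simp) (by simp; omega) hwG (by simp) (by simp; omega)
      (by simp) (by simp) h1G hG ?_ ?_
      (mF memE) (mF memT) (mF (memS v (by omega) hvn)) (mF (memS w (by omega) hwn))
      (mF (memS 1 (by omega) (by omega)))
      mG (mF (memP1 v hv3 hvn)) (mF (memP1 w hw3 hwn))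
    · intro y hy; simp at hy; rcases hy with rfl | rfl
      · exact hIcc 1 (by omega) (by omega)
      · exact hIcc _ (by omega) (by omega)
    · intro y hy; simp at hy; rcases hy with rfl | rfl
      · exact hIcc 1 (by omega) (by omega)
      · exact hIcc _ (by omega) (by omega)

/-- `sat*(n, B_3) ≤ 3n - 2`: there is an induced-`B_3`-saturated family of size
at most `3n - 2`. -/
theorem satStar_B3_le (n : ℕ) (hn : 4 ≤ n) :
    ∃ F : Finset (Finset ℕ),
      (∀ A ∈ F, A ⊆ Finset.Icc 1 n) ∧
      ¬ HasB3 (F : Set (Finset ℕ)) ∧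
      (∀ G : Finset ℕ, G ⊆ Finset.Icc 1 n → G ∉ F →
        HasB3 ((F : Set (Finset ℕ)) ∪ {G})) ∧
      F.card ≤ 3 * n - 2 := by
  exact ⟨Fam n, fun A hA => Fam_subset hn hA, noB3 hn,
    fun G hG hGF => saturated hn hG hGF, Fam_card hn⟩
end

section
/- Let k ≥ 2, m ≥ 1, n ≥ m + k. Define, for 2 ≤ z ≤ k, F_z = { F ⊆ [n] : |F| = z and |F ∩ [m+k−3]| ≥ z−1 }, and for 0 ≤ z ≤ k−2, F^z = { [n] \ F : F ⊆ [m+k−3], |F| = m+k−3−z }. Then the union (⋃_{z=2}^k F_z) ∪ (⋃_{z=0}^{k−2} F^z) contains no chain of k sets A_1 ⊊ A_2 ⊊ ... ⊊ A_k. -/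
/-- The middle part of the `mC_k` construction:
`(⋃_{z=2}^k F_z) ∪ (⋃_{z=0}^{k-2} F^z)`. -/
def famMid (k m n : ℕ) : Set (Finset ℕ) :=
  {F | F ⊆ Finset.Icc 1 n ∧ ∃ z, 2 ≤ z ∧ z ≤ k ∧ F.card = z ∧
        z - 1 ≤ (F ∩ Finset.Icc 1 (m + k - 3)).card}
    ∪ {F | ∃ z ≤ k - 2, ∃ E ⊆ Finset.Icc 1 (m + k - 3),
        E.card = m + k - 3 - z ∧ F = Finset.Icc 1 n \ E}

/-- The middle part contains no chain of `k` sets. -/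
theorem famMid_chain_free (k m n : ℕ) (hk : 2 ≤ k) (hm : 1 ≤ m) (hn : m + k ≤ n) :
    ¬ ∃ A : Fin k → Finset ℕ,
      (∀ i, A i ∈ famMid k m n) ∧
      (∀ i j : Fin k, i < j → A i ⊂ A j) := by
  rintro ⟨A, hmem, hchain⟩
  set I := Finset.Icc 1 (m + k - 3) with hI
  -- Classification of members: "type 1" (F_z) or "type 2" (F^z), in terms of cardinalities.
  have hclass : ∀ F ∈ famMid k m n,
      (2 ≤ F.card ∧ F.card ≤ k ∧ F.card ≤ (F ∩ I).card + 1) ∨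
      ((F ∩ I).card ≤ k - 2 ∧ F.card = (F ∩ I).card + (n - (m + k - 3))) := by
    rintro F (⟨hFn, z, hz2, hzk, hcard, hzI⟩ | ⟨z, hzk, E, hEI, hEcard, rfl⟩)
    · left
      rw [← hI] at hzI
      have := Finset.card_le_card (Finset.inter_subset_left : F ∩ I ⊆ F)
      omega
    · right
      have hIn : I ⊆ Finset.Icc 1 n := by
        rw [hI]; exact Finset.Icc_subset_Icc le_rfl (by omega)
      have hEn : E ⊆ Finset.Icc 1 n := hEI.trans hIn
      have h1 : (Finset.Icc 1 n \ E) ∩ I = I \ E := by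
        ext x
        simp only [Finset.mem_inter, Finset.mem_sdiff]
        constructor
        · rintro ⟨⟨_, hxE⟩, hxI⟩; exact ⟨hxI, hxE⟩
        · rintro ⟨hxI, hxE⟩; exact ⟨⟨hIn hxI, hxE⟩, hxI⟩
      have h2 : (Finset.Icc 1 n \ E).card = n - E.card := by
        rw [Finset.card_sdiff_of_subset hEn, Nat.card_Icc]; omega
      have h3 : (I \ E).card = (m + k - 3) - E.card := by
        rw [Finset.card_sdiff_of_subset hEI, Nat.card_Icc]; omega
      rw [h1, h2, h3]
      omega
  -- The level function.
  set L : Finset ℕ → ℕ := fun F => min F.card ((F ∩ I).card + 2) with hL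
  have hbound : ∀ F ∈ famMid k m n, 2 ≤ L F ∧ L F ≤ k := by
    intro F hF
    rcases hclass F hF with ⟨h1, h2, h3⟩ | ⟨h1, h2⟩ <;> simp only [hL] <;> omega
  -- The level strictly increases along strict inclusions in the family.
  have hstep : ∀ i j : Fin k, i < j → L (A i) < L (A j) := by
    intro i j hij
    have hss := hchain i j hij
    have hsub := hss.subset
    have hcard : (A i).card < (A j).card := Finset.card_lt_card hss
    have hint : ((A i) ∩ I).card ≤ ((A j) ∩ I).card :=
      Finset.card_le_card (Finset.inter_subset_inter hsub (subset_refl I))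
    have hdiff : ((A i) \ I).card ≤ ((A j) \ I).card :=
      Finset.card_le_card (Finset.sdiff_subset_sdiff hsub (subset_refl I))
    have hpi : ((A i) ∩ I).card + ((A i) \ I).card = (A i).card :=
      Finset.card_inter_add_card_sdiff _ _
    have hpj : ((A j) ∩ I).card + ((A j) \ I).card = (A j).card :=
      Finset.card_inter_add_card_sdiff _ _
    rcases hclass _ (hmem i) with h | h <;> rcases hclass _ (hmem j) with h' | h' <;>
      simp only [hL] <;> omega
  -- Along a chain of `k` sets, the level of the `j`-th set is at least `2 + j`.
  have key : ∀ j : ℕ, ∀ i : Fin k, i.val = j → 2 + j ≤ L (A i) := by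
    intro j
    induction j with
    | zero => intro i _; simpa using (hbound _ (hmem i)).1
    | succ j ih =>
      intro i hi
      have hj : j < k := by omega
      have h1 := ih ⟨j, hj⟩ rfl
      have h2 := hstep ⟨j, hj⟩ i (by simp [Fin.lt_def, hi])
      omega
  have hlast := key (k - 1) ⟨k - 1, by omega⟩ rfl
  have hub := (hbound _ (hmem ⟨k - 1, by omega⟩)).2
  omega
end

section
/- Let n ≥ 2t+2 and G ⊆ [n] with 2t+1 ∈ G, G ∩ [2t] = [k] where k ≤ t−2, and F = F_0 ∪ F_1 be the family from the (binom(2t,t)+1)C_2 construction. Then the binom(2t,t)+1 pairs consisting of (G, [n] \ [t−1, 2t]) together with (F, [n] \ ([2t+1] \ F)) for each t-subset F of [2t] form an induced copy of (binom(2t,t)+1) C_2 in F ∪ {G}: each pair is a 2-chain and no bottom set of one pair is contained in the top set of another. -/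
/-- The family `F_0` of the construction for `(binom(2t,t)+1) C_2`. -/
def famF0 (t : ℕ) : Set (Finset ℕ) :=
  {∅} ∪ {F | F ⊆ Finset.Icc 1 (2 * t + 1) ∧ F.card = t}
    ∪ {F | F ⊆ Finset.Icc 1 (2 * t + 1) ∧ F.card = t + 1 ∧ 2 * t + 1 ∈ F}
    ∪ {F | F ⊆ Finset.Icc 1 (2 * t) ∧ F.card = t + 2}

/-- `F = F_0 ∪ F_0^c` as subsets of `[n]`. -/
def famF (t n : ℕ) : Set (Finset ℕ) :=
  famF0 t ∪ ((fun F => Finset.Icc 1 n \ F) '' famF0 t)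

/-- Case 1 of the saturation proof: if `2t+1 ∈ G`, `G ∩ [2t] = [k]` with `k ≤ t - 2`,
then the pairs `(G, [n] \ [t-1,2t])` and `(F, [n] \ ([2t+1] \ F))` for the
`t`-subsets `F` of `[2t]` form an induced copy of `(binom(2t,t)+1) C_2` in `F ∪ {G}`. -/
theorem case1_copy (t n k : ℕ) (ht : 1 ≤ t) (hn : 2 * t + 2 ≤ n)
    (G : Finset ℕ) (hGsub : G ⊆ Finset.Icc 1 n) (hGF : G ∉ famF t n)
    (hGtop : 2 * t + 1 ∈ G)
    (hGk : G ∩ Finset.Icc 1 (2 * t) = Finset.Icc 1 k) (hk : k + 2 ≤ t) :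
    (Finset.Icc 1 n \ Finset.Icc (t - 1) (2 * t) ∈ famF t n) ∧
    (∀ F : Finset ℕ, F ⊆ Finset.Icc 1 (2 * t) → F.card = t →
      F ∈ famF t n ∧ Finset.Icc 1 n \ (Finset.Icc 1 (2 * t + 1) \ F) ∈ famF t n) ∧
    (G ⊂ Finset.Icc 1 n \ Finset.Icc (t - 1) (2 * t)) ∧
    (∀ F : Finset ℕ, F ⊆ Finset.Icc 1 (2 * t) → F.card = t →
      F ⊂ Finset.Icc 1 n \ (Finset.Icc 1 (2 * t + 1) \ F)) ∧
    (∀ F : Finset ℕ, F ⊆ Finset.Icc 1 (2 * t) → F.card = t →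
      ¬ G ⊆ Finset.Icc 1 n \ (Finset.Icc 1 (2 * t + 1) \ F)) ∧
    (∀ F : Finset ℕ, F ⊆ Finset.Icc 1 (2 * t) → F.card = t →
      ¬ F ⊆ Finset.Icc 1 n \ Finset.Icc (t - 1) (2 * t)) ∧
    (∀ F F' : Finset ℕ, F ⊆ Finset.Icc 1 (2 * t) → F' ⊆ Finset.Icc 1 (2 * t) →
      F.card = t → F'.card = t → F ≠ F' →
      ¬ F ⊆ Finset.Icc 1 n \ (Finset.Icc 1 (2 * t + 1) \ F')) := by
  have ht2 : 2 ≤ t := le_trans (by omega) hk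
  have h1 : Finset.Icc 1 n \ Finset.Icc (t - 1) (2 * t) ∈ famF t n := by
    refine Or.inr ⟨Finset.Icc (t - 1) (2 * t), Or.inr ⟨?_, ?_⟩, rfl⟩
    · intro x hx
      simp only [Finset.mem_Icc] at *
      omega
    · rw [Nat.card_Icc]; omega
  have hGsub2 : G ⊆ Finset.Icc 1 n \ Finset.Icc (t - 1) (2 * t) := by
    intro x hx
    obtain ⟨hx1, hxn⟩ := Finset.mem_Icc.mp (hGsub hx)
    rw [Finset.mem_sdiff, Finset.mem_Icc, Finset.mem_Icc]
    refine ⟨⟨hx1, hxn⟩, fun hx2 => ?_⟩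
    have hxG : x ∈ G ∩ Finset.Icc 1 (2 * t) := by
      rw [Finset.mem_inter, Finset.mem_Icc]; exact ⟨hx, by omega, hx2.2⟩
    rw [hGk, Finset.mem_Icc] at hxG
    omega
  refine ⟨h1, ?_, ?_, ?_, ?_, ?_, ?_⟩
  · intro F hF hcard
    have hsub : F ⊆ Finset.Icc 1 (2 * t + 1) := fun x hx => by
      have := hF hx; rw [Finset.mem_Icc] at *; omega
    constructor
    · exact Or.inl (Or.inl (Or.inl (Or.inr ⟨hsub, hcard⟩)))
    · refine Or.inr ⟨Finset.Icc 1 (2 * t + 1) \ F,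
        Or.inl (Or.inr ⟨Finset.sdiff_subset, ?_, ?_⟩), rfl⟩
      · rw [Finset.card_sdiff_of_subset hsub, Nat.card_Icc, hcard]; omega
      · rw [Finset.mem_sdiff, Finset.mem_Icc]
        refine ⟨⟨by omega, le_refl _⟩, fun h => ?_⟩
        have := hF h; rw [Finset.mem_Icc] at this; omega
  · refine ⟨hGsub2, fun hsup => hGF ?_⟩
    have : G = Finset.Icc 1 n \ Finset.Icc (t - 1) (2 * t) :=
      Finset.Subset.antisymm hGsub2 hsup
    rw [this]; exact h1
  · intro F hF hcard
    constructor
    · intro x hx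
      obtain ⟨hx1, hx2⟩ := Finset.mem_Icc.mp (hF hx)
      rw [Finset.mem_sdiff, Finset.mem_Icc]
      exact ⟨⟨hx1, by omega⟩, fun h => (Finset.mem_sdiff.mp h).2 hx⟩
    · intro hsup
      have h22 : (2 * t + 2) ∈ F := hsup (by
        rw [Finset.mem_sdiff, Finset.mem_Icc]
        refine ⟨⟨by omega, hn⟩, fun h => ?_⟩
        have := (Finset.mem_sdiff.mp h).1
        rw [Finset.mem_Icc] at this; omega)
      have := hF h22
      rw [Finset.mem_Icc] at this; omega
  · intro F hF hcard hsub
    have h2 := hsub hGtop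
    rw [Finset.mem_sdiff] at h2
    have h3 : 2 * t + 1 ∈ F := by
      by_contra h
      exact h2.2 (Finset.mem_sdiff.mpr ⟨Finset.mem_Icc.mpr ⟨by omega, le_refl _⟩, h⟩)
    have := hF h3
    rw [Finset.mem_Icc] at this; omega
  · intro F hF hcard hsub
    have hsmall : F ⊆ Finset.Icc 1 (t - 2) := by
      intro x hx
      obtain ⟨hx1, hx2⟩ := Finset.mem_Icc.mp (hF hx)
      have h2 := (Finset.mem_sdiff.mp (hsub hx)).2
      rw [Finset.mem_Icc] at h2
      rw [Finset.mem_Icc]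
      omega
    have := Finset.card_le_card hsmall
    rw [hcard, Nat.card_Icc] at this
    omega
  · intro F F' hF hF' hc hc' hne hsub
    apply hne
    apply Finset.eq_of_subset_of_card_le _ (by omega)
    intro x hx
    obtain ⟨hx1, hx2⟩ := Finset.mem_Icc.mp (hF hx)
    have h2 := (Finset.mem_sdiff.mp (hsub hx)).2
    by_contra hxF'
    exact h2 (Finset.mem_sdiff.mpr ⟨Finset.mem_Icc.mpr ⟨hx1, by omega⟩, hxF'⟩)
end

section
/- Let k ≥ 3 and consider subsets of [k+1]. The family A_1 ∪ A_1^c, where A_1 consists of all nonempty subsets of [k] ⊆ [n] and A_1^c their complements in [n] (n > k), is order-isomorphic to B_{k+1,-,-}, the poset of proper nonempty subsets of [k+1]; consequently A_1 ∪ A_1^c contains no induced copy of 2C_k + C_1. -/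
/-- The family `A_1 ∪ A_1^c`: nonempty subsets of `[k]` and their complements in `[n]`. -/
def famA1c (k n : ℕ) : Set (Finset ℕ) :=
  {A | A ⊆ Finset.Icc 1 k ∧ A.Nonempty}
    ∪ {B | ∃ A : Finset ℕ, A ⊆ Finset.Icc 1 k ∧ A.Nonempty ∧ B = Finset.Icc 1 n \ A}

/-- The poset `B_{k+1,-,-}` of proper nonempty subsets of `[k+1]`. -/
def Bkpp (k : ℕ) : Set (Finset ℕ) :=
  {S | S ⊆ Finset.Icc 1 (k + 1) ∧ S.Nonempty ∧ S ≠ Finset.Icc 1 (k + 1)}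

lemma aux_sdiff_subset_sdiff_iff {S X X' : Finset ℕ} (hX' : X' ⊆ S) :
    S \ X ⊆ S \ X' ↔ X' ⊆ X := by
  constructor
  · intro h x hx
    by_contra hxX
    have h1 : x ∈ S \ X := Finset.mem_sdiff.2 ⟨hX' hx, hxX⟩
    exact (Finset.mem_sdiff.1 (h h1)).2 hx
  · intro h
    exact Finset.sdiff_subset_sdiff le_rfl h

lemma aux_chain_card {k : ℕ} (c : Fin k → Finset ℕ)
    (hc : ∀ i j : Fin k, i < j → c i ⊂ c j) {m : ℕ} (hm : m < k) (h0 : 0 < k) :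
    (c ⟨0, h0⟩).card + m ≤ (c ⟨m, hm⟩).card := by
  induction m with
  | zero => simp
  | succ p ih =>
    have hp : p < k := by omega
    have h1 := ih hp
    have h2 : c ⟨p, hp⟩ ⊂ c ⟨p + 1, hm⟩ := hc _ _ (by simp [Fin.lt_def])
    have h3 := Finset.card_lt_card h2
    omega

/-- `A_1 ∪ A_1^c` is order-isomorphic to `B_{k+1,-,-}`, and consequently contains no
induced copy of `2C_k + C_1`. -/
theorem famA1c_iso_and_free (k n : ℕ) (hk : 3 ≤ k) (hn : k < n) :
    (∃ f : Finset ℕ → Finset ℕ,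
      (∀ A ∈ famA1c k n, f A ∈ Bkpp k) ∧
      (∀ B ∈ Bkpp k, ∃ A ∈ famA1c k n, f A = B) ∧
      (∀ A ∈ famA1c k n, ∀ A' ∈ famA1c k n, f A = f A' → A = A') ∧
      (∀ A ∈ famA1c k n, ∀ A' ∈ famA1c k n, (A ⊆ A' ↔ f A ⊆ f A'))) ∧
    (¬ ∃ (A B : Fin k → Finset ℕ) (E : Finset ℕ),
      (∀ i, A i ∈ famA1c k n) ∧ (∀ i, B i ∈ famA1c k n) ∧ E ∈ famA1c k n ∧
      (∀ i j : Fin k, i < j → A i ⊂ A j) ∧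
      (∀ i j : Fin k, i < j → B i ⊂ B j) ∧
      (∀ i j : Fin k, ¬ A i ⊆ B j ∧ ¬ B j ⊆ A i) ∧
      (∀ i, ¬ A i ⊆ E ∧ ¬ E ⊆ A i) ∧
      (∀ i, ¬ B i ⊆ E ∧ ¬ E ⊆ B i)) := by
  set I : Finset ℕ := Finset.Icc 1 k with hI
  set J : Finset ℕ := Finset.Icc 1 (k + 1) with hJ
  set N : Finset ℕ := Finset.Icc 1 n with hN
  have hIJ : I ⊆ J := by
    intro x hx; rw [hI, Finset.mem_Icc] at hx; rw [hJ, Finset.mem_Icc]; omega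
  have hJN : J ⊆ N := by
    intro x hx; rw [hJ, Finset.mem_Icc] at hx; rw [hN, Finset.mem_Icc]; omega
  have hk1J : k + 1 ∈ J := by rw [hJ, Finset.mem_Icc]; omega
  have hk1I : k + 1 ∉ I := by rw [hI, Finset.mem_Icc]; omega
  have hk1N : k + 1 ∈ N := hJN hk1J
  -- the map
  set f : Finset ℕ → Finset ℕ := fun A => if A ⊆ I then A else A ∩ J with hf
  have hcase : ∀ A ∈ famA1c k n,
      (A ⊆ I ∧ A.Nonempty) ∨ ∃ X, X ⊆ I ∧ X.Nonempty ∧ A = N \ X := by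
    intro A hA
    rcases hA with ⟨h1, h2⟩ | ⟨X, h1, h2, h3⟩
    · exact Or.inl ⟨h1, h2⟩
    · exact Or.inr ⟨X, h1, h2, h3⟩
  have hfval1 : ∀ A : Finset ℕ, A ⊆ I → f A = A := by
    intro A hA; simp [hf, hA]
  have hfval2 : ∀ X : Finset ℕ, X ⊆ I → f (N \ X) = J \ X := by
    intro X hX
    have hknX : k + 1 ∈ N \ X :=
      Finset.mem_sdiff.2 ⟨hk1N, fun h => hk1I (hX h)⟩
    have hns : ¬ (N \ X ⊆ I) := fun h => hk1I (h hknX)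
    rw [hf]
    simp only [hns, if_false]
    ext x
    simp only [Finset.mem_inter, Finset.mem_sdiff]
    constructor
    · rintro ⟨⟨_, hx2⟩, hx3⟩; exact ⟨hx3, hx2⟩
    · rintro ⟨hx1, hx2⟩; exact ⟨⟨hJN hx1, hx2⟩, hx1⟩
  -- membership
  have hmem : ∀ A ∈ famA1c k n, f A ∈ Bkpp k := by
    intro A hA
    rcases hcase A hA with ⟨h1, h2⟩ | ⟨X, h1, h2, rfl⟩
    · rw [hfval1 A h1]
      refine ⟨h1.trans hIJ, h2, ?_⟩
      intro hEq
      exact hk1I (h1 (hEq ▸ hk1J))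
    · rw [hfval2 X h1]
      refine ⟨Finset.sdiff_subset, ⟨k + 1, Finset.mem_sdiff.2 ⟨hk1J, fun h => hk1I (h1 h)⟩⟩, ?_⟩
      intro hEq
      obtain ⟨x, hx⟩ := h2
      have hxJ : x ∈ J := hIJ (h1 hx)
      have : x ∈ J \ X := hEq ▸ hxJ
      exact (Finset.mem_sdiff.1 this).2 hx
  -- order iso property
  have hiff : ∀ A ∈ famA1c k n, ∀ A' ∈ famA1c k n, (A ⊆ A' ↔ f A ⊆ f A') := by
    intro A hA A' hA'
    rcases hcase A hA with ⟨h1, h2⟩ | ⟨X, h1, h2, rfl⟩ <;>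
      rcases hcase A' hA' with ⟨h1', h2'⟩ | ⟨X', h1', h2', rfl⟩
    · rw [hfval1 A h1, hfval1 A' h1']
    · rw [hfval1 A h1, hfval2 X' h1']
      rw [Finset.subset_sdiff, Finset.subset_sdiff]
      constructor
      · rintro ⟨_, hd⟩; exact ⟨h1.trans hIJ, hd⟩
      · rintro ⟨_, hd⟩; exact ⟨(h1.trans hIJ).trans hJN, hd⟩
    · rw [hfval2 X h1, hfval1 A' h1']
      have hmemN : k + 1 ∈ N \ X := Finset.mem_sdiff.2 ⟨hk1N, fun h => hk1I (h1 h)⟩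
      have hmemJ : k + 1 ∈ J \ X := Finset.mem_sdiff.2 ⟨hk1J, fun h => hk1I (h1 h)⟩
      constructor
      · intro h; exact absurd (h1' (h hmemN)) hk1I
      · intro h; exact absurd (h1' (h hmemJ)) hk1I
    · rw [hfval2 X h1, hfval2 X' h1']
      rw [aux_sdiff_subset_sdiff_iff (h1'.trans (hIJ.trans hJN)),
        aux_sdiff_subset_sdiff_iff (h1'.trans hIJ)]
  -- injectivity
  have hinj : ∀ A ∈ famA1c k n, ∀ A' ∈ famA1c k n, f A = f A' → A = A' := by
    intro A hA A' hA' hEq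
    refine Finset.Subset.antisymm ?_ ?_
    · exact (hiff A hA A' hA').2 (hEq ▸ Finset.Subset.refl _)
    · exact (hiff A' hA' A hA).2 (hEq ▸ Finset.Subset.refl _)
  -- surjectivity
  have hsurj : ∀ B ∈ Bkpp k, ∃ A ∈ famA1c k n, f A = B := by
    intro S hS
    obtain ⟨hSJ, hSne, hSneq⟩ := hS
    by_cases h : k + 1 ∈ S
    · -- S contains k+1 : S is the image of a complement
      set X : Finset ℕ := I \ S with hX
      have hXI : X ⊆ I := Finset.sdiff_subset
      have hXne : X.Nonempty := by
        rw [Finset.nonempty_iff_ne_empty]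
        intro hXe
        have hIS : I ⊆ S := by
          intro x hx
          by_contra hxS
          have : x ∈ X := Finset.mem_sdiff.2 ⟨hx, hxS⟩
          rw [hXe] at this
          exact absurd this (Finset.notMem_empty x)
        apply hSneq
        refine Finset.Subset.antisymm hSJ ?_
        intro x hx
        rw [Finset.mem_Icc] at hx
        rcases Nat.lt_or_ge x (k + 1) with h' | h'
        · exact hIS (by rw [hI, Finset.mem_Icc]; omega)
        · have : x = k + 1 := by omega
          rw [this]; exact h
      refine ⟨N \ X, Or.inr ⟨X, hXI, hXne, rfl⟩, ?_⟩
      rw [hfval2 X hXI]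
      ext x
      simp only [Finset.mem_sdiff, hX]
      constructor
      · rintro ⟨hxJ, hx2⟩
        by_cases hxI : x ∈ I
        · by_contra hxS
          exact hx2 ⟨hxI, hxS⟩
        · have : x = k + 1 := by
            rw [Finset.mem_Icc] at hxJ
            rw [hI, Finset.mem_Icc] at hxI
            omega
          rw [this]; exact h
      · intro hxS
        exact ⟨hSJ hxS, fun h' => h'.2 hxS⟩
    · -- S avoids k+1 : S ⊆ I
      have hSI : S ⊆ I := by
        intro x hx
        have hxJ := hSJ hx
        rw [Finset.mem_Icc] at hxJ
        have hxk : x ≠ k + 1 := fun hh => h (hh ▸ hx)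
        rw [hI, Finset.mem_Icc]
        omega
      exact ⟨S, Or.inl ⟨hSI, hSne⟩, hfval1 S hSI⟩
  refine ⟨⟨f, hmem, hsurj, hinj, hiff⟩, ?_⟩
  -- no induced 2C_k + C_1
  rintro ⟨A, B, E, hAmem, hBmem, hEmem, hAchain, hBchain, hAB, hAE, hBE⟩
  have h0 : 0 < k := by omega
  have htop : k - 1 < k := by omega
  set i0 : Fin k := ⟨0, h0⟩ with hi0
  set itop : Fin k := ⟨k - 1, htop⟩ with hitop
  -- transported chains
  have hfAchain : ∀ i j : Fin k, i < j → f (A i) ⊂ f (A j) := by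
    intro i j hij
    have h1 := hAchain i j hij
    refine Finset.ssubset_iff_subset_ne.2 ⟨(hiff _ (hAmem i) _ (hAmem j)).1 h1.subset, ?_⟩
    intro hEq
    exact h1.ne (hinj _ (hAmem i) _ (hAmem j) hEq)
  have hfBchain : ∀ i j : Fin k, i < j → f (B i) ⊂ f (B j) := by
    intro i j hij
    have h1 := hBchain i j hij
    refine Finset.ssubset_iff_subset_ne.2 ⟨(hiff _ (hBmem i) _ (hBmem j)).1 h1.subset, ?_⟩
    intro hEq
    exact h1.ne (hinj _ (hBmem i) _ (hBmem j) hEq)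
  have cardJ : J.card = k + 1 := by rw [hJ, Nat.card_Icc]; omega
  -- cards of top and bottom
  have hcardtop : ∀ (c : Fin k → Finset ℕ), (∀ i, c i ∈ famA1c k n) →
      (∀ i j : Fin k, i < j → f (c i) ⊂ f (c j)) →
      (f (c itop)).card = k ∧ (f (c i0)).card = 1 := by
    intro c hcm' hcc
    have hcm : ∀ i, f (c i) ∈ Bkpp k := fun i => hmem _ (hcm' i)
    have hb := (hcm i0).2.1
    have hbc : 1 ≤ (f (c i0)).card := Finset.card_pos.2 hb
    have htc : (f (c itop)).card < k + 1 := by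
      have h1 : (f (c itop)).card ≤ J.card := Finset.card_le_card (hcm itop).1
      rcases Nat.lt_or_ge (f (c itop)).card (k + 1) with h' | h'
      · exact h'
      · exfalso
        have : f (c itop) = J := Finset.eq_of_subset_of_card_le (hcm itop).1 (by omega)
        exact (hcm itop).2.2 this
    have hchain : (f (c i0)).card + (k - 1) ≤ (f (c itop)).card :=
      aux_chain_card (fun i => f (c i)) hcc htop h0
    constructor <;> omega
  obtain ⟨hAtop, hA0⟩ := hcardtop A hAmem hfAchain
  obtain ⟨hBtop, _⟩ := hcardtop B hBmem hfBchain
  -- missing elements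
  have hmissA : ∃ a, J \ f (A itop) = {a} := by
    have : (J \ f (A itop)).card = 1 := by
      rw [Finset.card_sdiff_of_subset ((hmem _ (hAmem itop)).1), cardJ, hAtop]; omega
    exact Finset.card_eq_one.1 this
  have hmissB : ∃ b, J \ f (B itop) = {b} := by
    have : (J \ f (B itop)).card = 1 := by
      rw [Finset.card_sdiff_of_subset (hmem _ (hBmem itop)).1, cardJ, hBtop]; omega
    exact Finset.card_eq_one.1 this
  obtain ⟨a, ha⟩ := hmissA
  obtain ⟨b, hb⟩ := hmissB
  -- f E not below the tops : E contains a and b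
  have hEJ : f E ⊆ J := (hmem E hEmem).1
  have haE : a ∈ f E := by
    have h1 : ¬ E ⊆ A itop := (hAE itop).2
    have h2 : ¬ f E ⊆ f (A itop) := fun h => h1 ((hiff E hEmem _ (hAmem itop)).2 h)
    obtain ⟨x, hx1, hx2⟩ := Finset.not_subset.1 h2
    have : x ∈ J \ f (A itop) := Finset.mem_sdiff.2 ⟨hEJ hx1, hx2⟩
    rw [ha, Finset.mem_singleton] at this
    exact this ▸ hx1
  have hbE : b ∈ f E := by
    have h1 : ¬ E ⊆ B itop := (hBE itop).2
    have h2 : ¬ f E ⊆ f (B itop) := fun h => h1 ((hiff E hEmem _ (hBmem itop)).2 h)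
    obtain ⟨x, hx1, hx2⟩ := Finset.not_subset.1 h2
    have : x ∈ J \ f (B itop) := Finset.mem_sdiff.2 ⟨hEJ hx1, hx2⟩
    rw [hb, Finset.mem_singleton] at this
    exact this ▸ hx1
  -- f (A i0) is a singleton {x}
  obtain ⟨x, hx⟩ := Finset.card_eq_one.1 hA0
  -- x ∉ f E since A i0 ⊄ E
  have hxE : x ∉ f E := by
    have h1 : ¬ A i0 ⊆ E := (hAE i0).1
    have h2 : ¬ f (A i0) ⊆ f E := fun h => h1 ((hiff _ (hAmem i0) E hEmem).2 h)
    intro hxe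
    exact h2 (by rw [hx]; exact Finset.singleton_subset_iff.2 hxe)
  -- x ∉ f (B itop) since A i0 ⊄ B itop, hence x = b
  have hxb : x = b := by
    have h1 : ¬ A i0 ⊆ B itop := (hAB i0 itop).1
    have h2 : ¬ f (A i0) ⊆ f (B itop) := fun h => h1 ((hiff _ (hAmem i0) _ (hBmem itop)).2 h)
    have hxBtop : x ∉ f (B itop) := by
      intro hxin
      exact h2 (by rw [hx]; exact Finset.singleton_subset_iff.2 hxin)
    have hxJ : x ∈ J := (hmem _ (hAmem i0)).1 (by rw [hx]; exact Finset.mem_singleton_self x)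
    have : x ∈ J \ f (B itop) := Finset.mem_sdiff.2 ⟨hxJ, hxBtop⟩
    rw [hb, Finset.mem_singleton] at this
    exact this
  exact hxE (hxb ▸ hbE)
end

section
/- Let m ≥ 2 and n ≥ m+2. The family F = (⋃_{s=1}^{m−1} C_s) ∪ F_2 ∪ {[m,n]} ∪ {∅, [n]}, where C_s = { {s} ∪ [m,t] : t ∈ [m+1,n] } ∪ { {s} } and F_2 = binom([n],2) \ binom([m,n],2), contains no induced copy of m C_2: there are no m pairs (B_i, T_i) of sets in F with B_i ⊊ T_i and B_i ⊄ T_j for all i ≠ j. -/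
/-- The `k = 2` chain `C_s = { {s} ∪ [m,t] : t ∈ [m+1,n] } ∪ { {s} }`. -/
def chainC2 (m n s : ℕ) : Set (Finset ℕ) :=
  {A | ∃ t, m + 1 ≤ t ∧ t ≤ n ∧ A = insert s (Finset.Icc m t)} ∪ {({s} : Finset ℕ)}

/-- The `k = 2` construction:
`F = (⋃_{s=1}^{m-1} C_s) ∪ F_2 ∪ {[m,n]} ∪ {∅, [n]}`. -/
def famMC2 (m n : ℕ) : Set (Finset ℕ) :=
  {A | ∃ s, 1 ≤ s ∧ s ≤ m - 1 ∧ A ∈ chainC2 m n s}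
    ∪ {P | P ⊆ Finset.Icc 1 n ∧ P.card = 2 ∧ ¬ P ⊆ Finset.Icc m n}
    ∪ {Finset.Icc m n} ∪ {∅, Finset.Icc 1 n}

lemma mem_famMC2_cases {m n : ℕ} {A : Finset ℕ} (h : A ∈ famMC2 m n) :
    (∃ s t, 1 ≤ s ∧ s ≤ m - 1 ∧ m + 1 ≤ t ∧ t ≤ n ∧ A = insert s (Finset.Icc m t)) ∨
    (∃ s, 1 ≤ s ∧ s ≤ m - 1 ∧ A = {s}) ∨
    (A ⊆ Finset.Icc 1 n ∧ A.card = 2 ∧ ¬ A ⊆ Finset.Icc m n) ∨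
    A = Finset.Icc m n ∨ A = ∅ ∨ A = Finset.Icc 1 n := by
  simp only [famMC2, chainC2, Set.mem_union, Set.mem_setOf_eq, Set.mem_insert_iff,
    Set.mem_singleton_iff] at h
  rcases h with ((⟨s, hs1, hs2, ⟨t, ht1, ht2, hA⟩ | hA⟩ | hP) | hA) | hA | hA
  · exact Or.inl ⟨s, t, hs1, hs2, ht1, ht2, hA⟩
  · exact Or.inr (Or.inl ⟨s, hs1, hs2, hA⟩)
  · exact Or.inr (Or.inr (Or.inl hP))
  · exact Or.inr (Or.inr (Or.inr (Or.inl hA)))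
  · exact Or.inr (Or.inr (Or.inr (Or.inr (Or.inl hA))))
  · exact Or.inr (Or.inr (Or.inr (Or.inr (Or.inr hA))))

lemma famMC2_subset {m n : ℕ} (hm : 2 ≤ m) (hn : m + 2 ≤ n) {A : Finset ℕ}
    (h : A ∈ famMC2 m n) : A ⊆ Finset.Icc 1 n := by
  rcases mem_famMC2_cases h with ⟨s, t, hs1, hs2, ht1, ht2, rfl⟩ | ⟨s, hs1, hs2, rfl⟩ |
      ⟨hsub, _, _⟩ | rfl | rfl | rfl
  · exact Finset.insert_subset (Finset.mem_Icc.mpr ⟨hs1, by omega⟩)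
      (Finset.Icc_subset_Icc (by omega) ht2)
  · exact Finset.singleton_subset_iff.mpr (Finset.mem_Icc.mpr ⟨hs1, by omega⟩)
  · exact hsub
  · exact Finset.Icc_subset_Icc (by omega) le_rfl
  · exact Finset.empty_subset _
  · exact Finset.Subset.refl _

lemma famMC2_key {m n : ℕ} (hm : 2 ≤ m) (hn : m + 2 ≤ n) {B T : Finset ℕ}
    (hB : B ∈ famMC2 m n) (hT : T ∈ famMC2 m n) (hBT : B ⊂ T)
    (hB0 : B ≠ ∅) (hT1 : T ≠ Finset.Icc 1 n) :
    ∃ s, 1 ≤ s ∧ s ≤ m - 1 ∧ s ∈ T ∧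
      (B = {s} ∨
       (∃ t, t ≤ n ∧ T = insert s (Finset.Icc m t)) ∨
       (B = Finset.Icc m n ∧ T = insert s (Finset.Icc m n))) := by
  have hTsub' : T ⊆ Finset.Icc 1 n := famMC2_subset hm hn hT
  have hBneI : B ≠ Finset.Icc 1 n := by
    rintro rfl
    exact hBT.not_subset hTsub'
  rcases mem_famMC2_cases hT with ⟨s', t', hs1, hs2, ht1, ht2, rfl⟩ | ⟨s', hs1, hs2, rfl⟩ |
      ⟨hTsub, hTcard, hTnot⟩ | rfl | rfl | rfl
  · -- T = insert s' (Icc m t')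
    refine ⟨s', hs1, hs2, Finset.mem_insert_self _ _, ?_⟩
    by_cases hsB : s' ∈ B
    · exact Or.inr (Or.inl ⟨t', ht2, rfl⟩)
    · rcases mem_famMC2_cases hB with ⟨a, u, ha1, ha2, hu1, hu2, rfl⟩ | ⟨a, ha1, ha2, rfl⟩ |
          ⟨hBsub, hBcard, hBnot⟩ | rfl | rfl | rfl
      · exfalso
        have haT := hBT.subset (Finset.mem_insert_self a _)
        rcases Finset.mem_insert.mp haT with h | h
        · exact hsB (h ▸ Finset.mem_insert_self a _)
        · have := Finset.mem_Icc.mp h; omega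
      · exfalso
        have haT := hBT.subset (Finset.mem_singleton_self a)
        rcases Finset.mem_insert.mp haT with h | h
        · exact hsB (h ▸ Finset.mem_singleton_self a)
        · have := Finset.mem_Icc.mp h; omega
      · exfalso
        obtain ⟨x, hxB, hxnot⟩ := Finset.not_subset.mp hBnot
        rcases Finset.mem_insert.mp (hBT.subset hxB) with h | h
        · exact hsB (h ▸ hxB)
        · have := Finset.mem_Icc.mp h
          exact hxnot (Finset.mem_Icc.mpr ⟨this.1, le_trans this.2 ht2⟩)
      · have hnB : n ∈ Finset.Icc m n := Finset.mem_Icc.mpr ⟨by omega, le_rfl⟩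
        rcases Finset.mem_insert.mp (hBT.subset hnB) with h | h
        · omega
        · have := Finset.mem_Icc.mp h
          have ht'n : t' = n := by omega
          subst ht'n
          exact Or.inr (Or.inr ⟨rfl, rfl⟩)
      · exact absurd rfl hB0
      · exact absurd rfl hBneI
  · -- T = {s'}
    exact absurd (Finset.ssubset_singleton_iff.mp hBT) hB0
  · -- T is a 2-set
    have hcard : B.card < 2 := hTcard ▸ Finset.card_lt_card hBT
    rcases mem_famMC2_cases hB with ⟨a, u, ha1, ha2, hu1, hu2, rfl⟩ | ⟨a, ha1, ha2, rfl⟩ |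
        ⟨hBsub, hBcard, hBnot⟩ | rfl | rfl | rfl
    · exfalso
      have h1 : 1 < (insert a (Finset.Icc m u)).card :=
        Finset.one_lt_card.mpr ⟨a, Finset.mem_insert_self _ _, m,
          Finset.mem_insert_of_mem (Finset.mem_Icc.mpr ⟨le_rfl, by omega⟩), by omega⟩
      omega
    · exact ⟨a, ha1, ha2, hBT.subset (Finset.mem_singleton_self a), Or.inl rfl⟩
    · omega
    · exfalso
      have h1 : 1 < (Finset.Icc m n).card :=
        Finset.one_lt_card.mpr ⟨m, Finset.mem_Icc.mpr ⟨le_rfl, by omega⟩, n,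
          Finset.mem_Icc.mpr ⟨by omega, le_rfl⟩, by omega⟩
      omega
    · exact absurd rfl hB0
    · exact absurd rfl hBneI
  · -- T = Icc m n
    exfalso
    rcases mem_famMC2_cases hB with ⟨a, u, ha1, ha2, hu1, hu2, rfl⟩ | ⟨a, ha1, ha2, rfl⟩ |
        ⟨hBsub, hBcard, hBnot⟩ | rfl | rfl | rfl
    · have := Finset.mem_Icc.mp (hBT.subset (Finset.mem_insert_self a _)); omega
    · have := Finset.mem_Icc.mp (hBT.subset (Finset.mem_singleton_self a)); omega
    · exact hBnot hBT.subset
    · exact (lt_irrefl _ hBT)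
    · exact hB0 rfl
    · exact hBneI rfl
  · -- T = ∅
    exact absurd (Finset.subset_empty.mp hBT.subset) hB0
  · exact absurd rfl hT1

/-- The family contains no induced copy of `m C_2`. -/
theorem famMC2_free (m n : ℕ) (hm : 2 ≤ m) (hn : m + 2 ≤ n) :
    ¬ ∃ B T : Fin m → Finset ℕ,
      (∀ i, B i ∈ famMC2 m n ∧ T i ∈ famMC2 m n) ∧
      (∀ i, B i ⊂ T i) ∧
      (∀ i j, i ≠ j → ¬ B i ⊆ T j) := by
  rintro ⟨B, T, hmem, hss, hnot⟩
  have ntv : Nontrivial (Fin m) :=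
    ⟨⟨0, by omega⟩, ⟨1, by omega⟩, by simp [Fin.ext_iff]⟩
  have hBne : ∀ i, B i ≠ ∅ := by
    intro i h
    obtain ⟨j, hj⟩ := exists_ne i
    exact hnot i j (Ne.symm hj) (by rw [h]; exact Finset.empty_subset _)
  have hTne : ∀ i, T i ≠ Finset.Icc 1 n := by
    intro i h
    obtain ⟨j, hj⟩ := exists_ne i
    exact hnot j i hj (by rw [h]; exact famMC2_subset hm hn (hmem j).1)
  have key : ∀ i, ∃ s, 1 ≤ s ∧ s ≤ m - 1 ∧ s ∈ T i ∧
      (B i = {s} ∨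
       (∃ t, t ≤ n ∧ T i = insert s (Finset.Icc m t)) ∨
       (B i = Finset.Icc m n ∧ T i = insert s (Finset.Icc m n))) :=
    fun i => famMC2_key hm hn (hmem i).1 (hmem i).2 (hss i) (hBne i) (hTne i)
  choose s hs1 hs2 hsT hc using key
  have inj : ∀ i j, i ≠ j → s i ≠ s j := by
    intro i j hij heq
    rcases hc i with hci | hci | hci
    · -- B i = {s i}
      exact hnot i j hij (by rw [hci]; exact Finset.singleton_subset_iff.mpr (heq ▸ hsT j))
    all_goals rcases hc j with hcj | hcj | hcj
    · exact hnot j i (Ne.symm hij)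
        (by rw [hcj]; exact Finset.singleton_subset_iff.mpr (heq ▸ hsT i))
    · -- both of chain-top form
      obtain ⟨ti, hti, hTi⟩ := hci
      obtain ⟨tj, htj, hTj⟩ := hcj
      rcases le_total ti tj with h | h
      · refine hnot i j hij ((hss i).subset.trans ?_)
        rw [hTi, hTj, heq]
        exact Finset.insert_subset_insert _ (Finset.Icc_subset_Icc le_rfl h)
      · refine hnot j i (Ne.symm hij) ((hss j).subset.trans ?_)
        rw [hTi, hTj, heq]
        exact Finset.insert_subset_insert _ (Finset.Icc_subset_Icc le_rfl h)
    · -- i chain-top, j full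
      obtain ⟨ti, hti, hTi⟩ := hci
      refine hnot i j hij ((hss i).subset.trans ?_)
      rw [hTi, hcj.2, heq]
      exact Finset.insert_subset_insert _ (Finset.Icc_subset_Icc le_rfl hti)
    · exact hnot j i (Ne.symm hij)
        (by rw [hcj]; exact Finset.singleton_subset_iff.mpr (heq ▸ hsT i))
    · -- i full, j chain-top
      obtain ⟨tj, htj, hTj⟩ := hcj
      refine hnot j i (Ne.symm hij) ((hss j).subset.trans ?_)
      rw [hTj, hci.2, heq]
      exact Finset.insert_subset_insert _ (Finset.Icc_subset_Icc le_rfl htj)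
    · -- both full
      refine hnot i j hij ?_
      rw [hci.1, hcj.2]
      exact Finset.subset_insert _ _
  have hcard : (Finset.univ : Finset (Fin m)).card ≤ (Finset.Icc 1 (m - 1)).card :=
    Finset.card_le_card_of_injOn s
      (fun i _ => Finset.mem_Icc.mpr ⟨hs1 i, hs2 i⟩)
      (fun i _ j _ h => by_contra fun hne => inj i j hne h)
  simp only [Finset.card_univ, Fintype.card_fin, Nat.card_Icc] at hcard
  omega
end
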